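/- arXiv:math-ph/0204001 — 6 statements merged into one kernel-verified Lean document; each statement's English description precedes it below -/
import Mathlib

section
/- Let Z be a finite set of distinct points in ℂ and let w : Z → Mat(2,ℂ) be such that w(x)² = 0 (w(x) is nilpotent) for every x ∈ Z. If m solves the discrete Riemann–Hilbert problem (Z,w), then the function ζ ↦ det m(ζ) extends from ℂ∖Z to a function analytic on all of ℂ. If, in addition, det m(ζ) → 1 as ζ → ∞, then this entire extension is identically equal to 1. -/
open Filter Topology Matrix Polynomial

noncomputable section

/-- 2×2 complex matrices. -/
abbrev Mat2 : Type := Matrix (Fin 2) (Fin 2) ℂ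

/-- Entrywise complex differentiability (= analyticity) of a matrix-valued function on a set. -/
def EntryDiffOn (m : ℂ → Mat2) (U : Set ℂ) : Prop :=
  ∀ i j, DifferentiableOn ℂ (fun ζ => m ζ i j) U

/-- `m` solves the discrete Riemann–Hilbert problem `(Z, w)`: `m` is analytic off `Z`, has at
most a simple pole at each `x ∈ Z` (i.e. `ζ ↦ (ζ - x) • m ζ` extends analytically to a
neighbourhood of `x`), and the value at `x` of this extension (the residue of `m` at `x`)
equals the limit of `m(ζ) * w(x)` as `ζ → x`. -/
def SolvesDRHP (Z : Finset ℂ) (w : ℂ → Mat2) (m : ℂ → Mat2) : Prop :=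
  EntryDiffOn m ((Z : Set ℂ))ᶜ ∧
  ∀ x ∈ Z, ∃ g : ℂ → Mat2,
    EntryDiffOn g (((Z : Set ℂ))ᶜ ∪ {x}) ∧
    (∀ ζ, ζ ∉ (Z : Set ℂ) → g ζ = (ζ - x) • m ζ) ∧
    Filter.Tendsto (fun ζ => m ζ * w x) (𝓝[≠] x) (𝓝 (g x))

/-- The asymptotic condition `m(ζ) · diag(ζ^{-k}, ζ^k) → I` as `ζ → ∞`. -/
def AsympId (k : ℕ) (m : ℂ → Mat2) : Prop :=
  Filter.Tendsto (fun ζ : ℂ => m ζ * Matrix.diagonal ![ζ⁻¹ ^ k, ζ ^ k])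
    (Bornology.cobounded ℂ) (𝓝 1)

/-!
Near `x ∈ Z` write `W = w x` and `χ(ζ) = m(ζ) (1 - W / (ζ - x))`. Since `W` is nilpotent,
`det (1 - t W) = 1`, so `det χ = det m`. With `g(ζ) = (ζ - x) m(ζ)` the residue condition says
`m(ζ) W → g(x)`, hence `(ζ - x) χ(ζ) = g(ζ) - m(ζ) W → 0`: every entry of `χ` has a removable
singularity at `x`, so `det m` has a limit there and extends to an entire function.
If `det m → 1` at infinity, Liouville's theorem forces the extension to be `1`.
-/

theorem Set.Finite.compl_mem_nhdsNE {X : Type*} [TopologicalSpace X] [T1Space X] {S : Set X}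
    (hS : S.Finite) (x : X) : Sᶜ ∈ 𝓝[≠] x := by
  simpa [Set.compl_eq_univ_sdiff] using nhdsNE_of_nhdsNE_sdiff_finite (x := x) univ_mem hS

namespace Matrix

variable {n R : Type*} [Fintype n] [DecidableEq n] [CommRing R] [IsReduced R] {M : Matrix n n R}

theorem charpolyRev_eq_one_of_isNilpotent (hM : IsNilpotent M) : M.charpolyRev = 1 := by
  obtain ⟨-, hcoeff⟩ :=
    isUnit_iff_coeff_isUnit_isNilpotent.mp (isUnit_charpolyRev_of_isNilpotent hM)
  ext (_ | i)
  · simp [coeff_zero_eq_eval_zero]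
  · simpa [coeff_one] using (hcoeff (i + 1) i.succ_ne_zero).eq_zero

theorem det_one_sub_smul_of_isNilpotent (hM : IsNilpotent M) (t : R) : (1 - t • M).det = 1 := by
  have h := congrArg (eval t) (charpolyRev_eq_one_of_isNilpotent hM)
  rw [charpolyRev, ← coe_evalRingHom, RingHom.map_det, map_one] at h
  convert h using 2
  ext i j
  by_cases hij : i = j <;> simp [hij, mul_comm t]

end Matrix

namespace Complex

variable {E : Type*} [NormedAddCommGroup E] [NormedSpace ℂ E] [CompleteSpace E]

theorem tendsto_limUnder_of_differentiable_on_punctured_nhds_of_tendsto_sub_smul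
    {f : ℂ → E} {c : ℂ} (hd : ∀ᶠ z in 𝓝[≠] c, DifferentiableAt ℂ f z)
    (h0 : Tendsto (fun z => (z - c) • f z) (𝓝[≠] c) (𝓝 0)) :
    Tendsto f (𝓝[≠] c) (𝓝 (limUnder (𝓝[≠] c) f)) := by
  refine tendsto_limUnder_of_differentiable_on_punctured_nhds_of_isLittleO hd ?_
  have hsub0 : Tendsto (fun z : ℂ => z - c) (𝓝[≠] c) (𝓝 0) :=
    tendsto_sub_nhds_zero_iff.2 nhdsWithin_le_nhds
  have h1 : (fun z => (z - c) • (f z - f c)) =o[𝓝[≠] c] fun _ => (1 : ℂ) := by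
    rw [Asymptotics.isLittleO_one_iff]
    simpa [smul_sub] using h0.sub (hsub0.smul_const (f c))
  refine ((Asymptotics.isBigO_refl (fun z => (z - c)⁻¹) _).smul_isLittleO h1).congr' ?_ ?_
  · filter_upwards [self_mem_nhdsWithin] with z hz
    rw [smul_smul, inv_mul_cancel₀ (sub_ne_zero.2 hz), one_smul]
  · simp

theorem exists_differentiable_eqOn_compl_of_tendsto {S : Set ℂ} (hS : S.Finite) {F : ℂ → E}
    (hF : DifferentiableOn ℂ F Sᶜ) (hlim : ∀ x ∈ S, ∃ L, Tendsto F (𝓝[≠] x) (𝓝 L)) :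
    ∃ h : ℂ → E, Differentiable ℂ h ∧ Set.EqOn h F Sᶜ := by
  classical
  set h := S.piecewise (fun x => limUnder (𝓝[≠] x) F) F
  have hEq : Set.EqOn h F Sᶜ := S.piecewise_eqOn_compl _ _
  have hSo : IsOpen Sᶜ := hS.isClosed.isOpen_compl
  have hoff : ∀ z ∉ S, DifferentiableAt ℂ h z := fun z hz =>
    (hF.differentiableAt (hSo.mem_nhds hz)).congr_of_eventuallyEq
      (eventually_of_mem (hSo.mem_nhds hz) hEq)
  refine ⟨h, fun z => ?_, hEq⟩
  by_cases hz : z ∈ S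
  · obtain ⟨L, hL⟩ := hlim z hz
    have hSc : Sᶜ ∈ 𝓝[≠] z := hS.compl_mem_nhdsNE z
    have hhz : h z = L := (S.piecewise_eq_of_mem _ _ hz).trans hL.limUnder_eq
    have hcont : ContinuousAt h z := by
      rw [← continuousWithinAt_compl_self, ContinuousWithinAt, hhz]
      exact hL.congr' (eventually_of_mem hSc fun y hy => (hEq hy).symm)
    exact (analyticAt_of_differentiable_on_punctured_nhds_of_continuousAt
      (eventually_of_mem hSc hoff) hcont).differentiableAt
  · exact hoff z hz

end Complex

namespace EntryDiffOn

variable {U : Set ℂ} {A B : ℂ → Mat2}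

theorem const (W : Mat2) : EntryDiffOn (fun _ => W) U :=
  fun _ _ => differentiableOn_const _

theorem sub (hA : EntryDiffOn A U) (hB : EntryDiffOn B U) : EntryDiffOn (fun ζ => A ζ - B ζ) U :=
  fun i j => (hA i j).sub (hB i j)

theorem smul {c : ℂ → ℂ} (hc : DifferentiableOn ℂ c U) (hA : EntryDiffOn A U) :
    EntryDiffOn (fun ζ => c ζ • A ζ) U :=
  fun i j => hc.mul (hA i j)

theorem mul (hA : EntryDiffOn A U) (hB : EntryDiffOn B U) : EntryDiffOn (fun ζ => A ζ * B ζ) U :=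
  fun i j => by
    simp only [Matrix.mul_apply, Fin.sum_univ_two]
    exact ((hA i 0).mul (hB 0 j)).add ((hA i 1).mul (hB 1 j))

theorem det (hA : EntryDiffOn A U) : DifferentiableOn ℂ (fun ζ => (A ζ).det) U := by
  simp only [Matrix.det_fin_two]
  exact ((hA 0 0).mul (hA 1 1)).sub ((hA 0 1).mul (hA 1 0))

theorem continuousAt (hA : EntryDiffOn A U) {x : ℂ} (hx : U ∈ 𝓝 x) : ContinuousAt A x :=
  continuousAt_pi.2 fun i => continuousAt_pi.2 fun j =>
    ((hA i j).differentiableAt hx).continuousAt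

theorem exists_tendsto_of_tendsto_sub_smul (hA : EntryDiffOn A U) (hU : IsOpen U) {x : ℂ}
    (hUx : U ∈ 𝓝[≠] x) (h0 : Tendsto (fun ζ => (ζ - x) • A ζ) (𝓝[≠] x) (𝓝 0)) :
    ∃ L, Tendsto A (𝓝[≠] x) (𝓝 L) := by
  refine ⟨fun i j => limUnder (𝓝[≠] x) fun ζ => A ζ i j, tendsto_pi_nhds.2 fun i =>
    tendsto_pi_nhds.2 fun j => ?_⟩
  refine Complex.tendsto_limUnder_of_differentiable_on_punctured_nhds_of_tendsto_sub_smul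
    (eventually_of_mem hUx fun ζ hζ => (hA i j).differentiableAt (hU.mem_nhds hζ)) ?_
  exact ((continuous_apply j).comp (continuous_apply i)).continuousAt.tendsto.comp h0

end EntryDiffOn

theorem SolvesDRHP.exists_tendsto_det {Z : Finset ℂ} {w m : ℂ → Mat2} (hm : SolvesDRHP Z w m)
    {x : ℂ} (hx : x ∈ Z) (hw : IsNilpotent (w x)) :
    ∃ L, Tendsto (fun ζ => (m ζ).det) (𝓝[≠] x) (𝓝 L) := by
  obtain ⟨hmd, hres⟩ := hm
  obtain ⟨g, hg, hgm, hglim⟩ := hres x hx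
  have hZo : IsOpen (Z : Set ℂ)ᶜ := Z.finite_toSet.isClosed.isOpen_compl
  have hZx : (Z : Set ℂ)ᶜ ∈ 𝓝[≠] x := Z.finite_toSet.compl_mem_nhdsNE x
  have hne : ∀ ζ ∉ (Z : Set ℂ), ζ - x ≠ 0 := fun ζ hζ =>
    sub_ne_zero.2 (ne_of_mem_of_not_mem hx hζ).symm
  set χ : ℂ → Mat2 := fun ζ => m ζ * (1 - (ζ - x)⁻¹ • w x)
  have hχ : EntryDiffOn χ (Z : Set ℂ)ᶜ :=
    hmd.mul ((EntryDiffOn.const 1).sub (EntryDiffOn.smul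
      ((differentiableOn_id.sub_const x).inv hne) (EntryDiffOn.const _)))
  have h0 : Tendsto (fun ζ => (ζ - x) • χ ζ) (𝓝[≠] x) (𝓝 0) := by
    have hgx : ContinuousAt g x :=
      hg.continuousAt (by rw [Set.union_singleton]; exact insert_mem_nhds_iff.2 hZx)
    have := (hgx.tendsto.mono_left nhdsWithin_le_nhds).sub hglim
    rw [sub_self] at this
    refine this.congr' (eventually_of_mem hZx fun ζ hζ => ?_)
    simp [χ, hgm ζ hζ, Matrix.mul_sub, smul_sub, smul_smul, mul_inv_cancel₀ (hne ζ hζ)]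
  obtain ⟨L, hL⟩ := hχ.exists_tendsto_of_tendsto_sub_smul hZo hZx h0
  refine ⟨L.det, ((continuous_id.matrix_det.tendsto L).comp hL).congr'
    (eventually_of_mem hZx fun ζ _ => ?_)⟩
  simp [χ, Matrix.det_one_sub_smul_of_isNilpotent hw]

/-- if every jump matrix is nilpotent, `det m` extends to an entire function,
and if moreover `det m(ζ) → 1` at infinity, any such entire extension is identically `1`. -/
theorem stmt0 (Z : Finset ℂ) (w m : ℂ → Mat2)
    (hw : ∀ x ∈ Z, w x * w x = 0)
    (hm : SolvesDRHP Z w m) :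
    (∃ h : ℂ → ℂ, Differentiable ℂ h ∧ ∀ ζ ∉ (Z : Set ℂ), h ζ = (m ζ).det) ∧
    (∀ h : ℂ → ℂ, Differentiable ℂ h → (∀ ζ ∉ (Z : Set ℂ), h ζ = (m ζ).det) →
      Filter.Tendsto (fun ζ => (m ζ).det) (Bornology.cobounded ℂ) (𝓝 1) →
      ∀ ζ, h ζ = 1) := by
  refine ⟨?_, fun h hh hhm hlim => ?_⟩
  · obtain ⟨h, hh, hhm⟩ := Complex.exists_differentiable_eqOn_compl_of_tendsto Z.finite_toSet
      hm.1.det fun x hx => hm.exists_tendsto_det hx ⟨2, by rw [pow_two, hw x hx]⟩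
    exact ⟨h, hh, fun ζ hζ => hhm hζ⟩
  · have hZ : (Z : Set ℂ)ᶜ ∈ Bornology.cobounded ℂ :=
      Bornology.isBounded_def.mp Z.finite_toSet.isBounded
    have hlim' : Tendsto h (Bornology.cobounded ℂ) (𝓝 1) :=
      hlim.congr' (eventually_of_mem hZ fun ζ hζ => (hhm ζ hζ).symm)
    rw [Metric.cobounded_eq_cocompact] at hlim'
    exact fun ζ => hh.apply_eq_of_tendsto_cocompact ζ hlim'
end
end

section
/- Let X = {x_0,…,x_N} ⊂ ℂ be a finite set of N+1 distinct points, let ω : X → ℂ be a nondegenerate weight, let {P_n}_{n=0}^N be the associated monic orthogonal polynomials, and set w(x) = [[0, ω(x)],[0,0]] for x ∈ X. Then for every integer k with 1 ≤ k ≤ N, the discrete Riemann–Hilbert problem (X,w) has exactly one solution m satisfying m(ζ)·diag(ζ^{−k}, ζ^{k}) → I as ζ → ∞; moreover, the (1,1) entry of m is the polynomial P_k and the (2,1) entry of m is (P_{k−1},P_{k−1})_ω^{−1}·P_{k−1}. -/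
open Filter Topology Matrix Polynomial

noncomputable section

/-- The bilinear form `(f,g)_ω = Σ_{x=0}^{N} f(π x) g(π x) ω x` on complex polynomials,
for a weight `ω` on the `N+1` points `π 0, …, π N`. -/
def ipC (N : ℕ) (π ω : ℕ → ℂ) (f g : Polynomial ℂ) : ℂ :=
  ∑ x ∈ Finset.range (N + 1), f.eval (π x) * g.eval (π x) * ω x

/-- The weight `ω` on the `N+1` points `π 0, …, π N` is nondegenerate: for every `d ≤ N`,
the form `(·,·)_ω` is nondegenerate on polynomials of degree at most `d`. -/
def Nondeg (N : ℕ) (π ω : ℕ → ℂ) : Prop :=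
  ∀ d ≤ N, ∀ f : Polynomial ℂ, f.degree ≤ (d : ℕ) →
    (∀ g : Polynomial ℂ, g.degree ≤ (d : ℕ) → ipC N π ω f g = 0) → f = 0

/-!
The problem decouples into its two rows `(m₀, m₁)`. The first column of `w x` vanishes, so
`m₀` has no poles and is entire; the normalization `m₀ ζ⁻ᵏ → δ` then makes it a polynomial `q`
of degree at most `k` (Liouville). The residue condition gives `m₁` simple poles with residues
`q x * ω x`, and `m₁ → 0`, so `m₁` is the discrete Cauchy transform `∑ₓ q x ω x / (ζ - x)`.
Expanding `ζᵏ / (ζ - x)` as a geometric sum, `ζᵏ m₁ ζ` is a polynomial whose coefficients are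
the moments `(q, Xⁱ)_ω`, plus a term tending to `0`; so the normalization of `m₁ ζᵏ` amounts to
moment conditions on `q`. By nondegeneracy these determine `q`, and `P k` and
`(P (k-1), P (k-1))_ω⁻¹ • P (k-1)` satisfy them.
-/

open Bornology

lemma Finset.eventually_notMem_cobounded (S : Finset ℂ) :
    ∀ᶠ ζ in cobounded ℂ, ζ ∉ (S : Set ℂ) :=
  S.finite_toSet.isBounded

lemma Finset.eventually_notMem_nhdsNE (S : Finset ℂ) (x : ℂ) :
    ∀ᶠ ζ in 𝓝[≠] x, ζ ∉ (S : Set ℂ) := by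
  have : ∀ᶠ ζ in 𝓝[≠] x, ∀ y ∈ S, ζ ≠ y := by
    refine (eventually_all_finset S).2 fun y _ => ?_
    rcases eq_or_ne y x with rfl | hyx
    · exact self_mem_nhdsWithin
    · exact eventually_nhdsWithin_of_eventually_nhds (eventually_ne_nhds hyx.symm)
  filter_upwards [this] with ζ hζ hS
  exact hζ ζ hS rfl

lemma Finset.isOpen_compl_union_singleton (S : Finset ℂ) (x : ℂ) :
    IsOpen ((S : Set ℂ)ᶜ ∪ {x}) := by
  have : (S : Set ℂ)ᶜ ∪ {x} = ((S.erase x : Finset ℂ) : Set ℂ)ᶜ := by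
    ext ζ; by_cases ζ = x <;> simp_all
  exact this ▸ (S.erase x).finite_toSet.isClosed.isOpen_compl

lemma tendsto_inv_pow_cobounded {k : ℕ} (hk : k ≠ 0) :
    Tendsto (fun ζ : ℂ => ζ⁻¹ ^ k) (cobounded ℂ) (𝓝 0) := by
  simpa [zero_pow hk] using (tendsto_inv₀_cobounded (α := ℂ)).pow k

lemma Polynomial.tendsto_eval_mul_inv_pow {q : ℂ[X]} {k : ℕ} (hq : q.natDegree ≤ k) :
    Tendsto (fun ζ => q.eval ζ * ζ⁻¹ ^ k) (cobounded ℂ) (𝓝 (q.coeff k)) := by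
  -- `q ζ * ζ⁻¹ ^ k = (q.reflect k).eval ζ⁻¹`
  have hlim : Tendsto (fun ζ : ℂ => (q.reflect k).eval ζ⁻¹) (cobounded ℂ)
      (𝓝 ((q.reflect k).eval 0)) :=
    ((q.reflect k).continuous.tendsto 0).comp tendsto_inv₀_cobounded
  rw [← coeff_zero_eq_eval_zero, coeff_reflect, revAt_zero] at hlim
  refine hlim.congr' ?_
  filter_upwards [eventually_ne_cobounded 0] with ζ hζ
  have : Invertible ζ⁻¹ := invertibleOfNonzero (inv_ne_zero hζ)
  simpa using (eval₂_reflect_mul_pow (RingHom.id ℂ) ζ⁻¹ k (q.reflect k)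
    (natDegree_reflect_le.trans (max_le le_rfl hq))).symm

lemma Polynomial.eq_C_of_tendsto_cobounded {q : ℂ[X]} {c : ℂ}
    (h : Tendsto q.eval (cobounded ℂ) (𝓝 c)) : q = C c :=
  Polynomial.funext fun ζ => by
    rw [eval_C]
    exact q.differentiable.apply_eq_of_tendsto_cocompact ζ
      (Metric.cobounded_eq_cocompact (α := ℂ) ▸ h)

lemma Differentiable.exists_polynomial_of_tendsto_mul_inv_pow {F : ℂ → ℂ}
    (hF : Differentiable ℂ F) {k : ℕ} {c : ℂ}
    (h : Tendsto (fun ζ => F ζ * ζ⁻¹ ^ k) (cobounded ℂ) (𝓝 c)) :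
    ∃ q : ℂ[X], q.natDegree ≤ k ∧ ∀ ζ, F ζ = q.eval ζ := by
  induction k generalizing F with
  | zero =>
    refine ⟨C c, by simp, fun ζ => ?_⟩
    simpa using hF.apply_eq_of_tendsto_cocompact ζ
      (Metric.cobounded_eq_cocompact (α := ℂ) ▸ by simpa using h)
  | succ k ih =>
    -- `F = F 0 + ζ * dslope F 0 ζ`, and `dslope F 0` grows like `ζ ^ k`
    have hF_eq : ∀ ζ, F ζ = F 0 + ζ * dslope F 0 ζ := fun ζ => by
      have := sub_smul_dslope F 0 ζ
      rw [sub_zero, smul_eq_mul] at this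
      linear_combination -this
    have hslope : Differentiable ℂ (dslope F 0) := by
      rw [← differentiableOn_univ, Complex.differentiableOn_dslope univ_mem]
      exact hF.differentiableOn
    obtain ⟨q, hq, hslope_eq⟩ := ih hslope <| by
      have hlim := h.sub ((tendsto_inv_pow_cobounded (k := k + 1) (by omega)).const_mul (F 0))
      rw [mul_zero, sub_zero] at hlim
      refine hlim.congr' ?_
      filter_upwards [eventually_ne_cobounded 0] with ζ hζ
      rw [hF_eq ζ]
      linear_combination (dslope F 0 ζ * ζ⁻¹ ^ k) * mul_inv_cancel₀ hζ
    refine ⟨C (F 0) + X * q, ?_, fun ζ => by simp [hF_eq ζ, hslope_eq ζ]⟩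
    refine (natDegree_add_le _ _).trans (max_le (by simp) ?_)
    exact natDegree_mul_le.trans (by simp; omega)

lemma exists_differentiable_eq_of_eventuallyEq (S : Finset ℂ) {f : ℂ → ℂ}
    (hf : DifferentiableOn ℂ f (S : Set ℂ)ᶜ)
    (hext : ∀ x ∈ S, ∃ G : ℂ → ℂ, DifferentiableAt ℂ G x ∧ G =ᶠ[𝓝[≠] x] f) :
    ∃ F : ℂ → ℂ, Differentiable ℂ F ∧ ∀ ζ ∉ (S : Set ℂ), F ζ = f ζ := by
  classical
  choose G hG hGf using hext
  refine ⟨fun ζ => if h : ζ ∈ S then G ζ h ζ else f ζ, fun z => ?_, fun ζ hζ => dif_neg hζ⟩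
  by_cases hz : z ∈ S
  · refine (hG z hz).congr_of_eventuallyEq ?_
    rw [EventuallyEq, ← nhdsNE_sup_pure, eventually_sup]
    refine ⟨?_, by simp [hz]⟩
    filter_upwards [hGf z hz, S.eventually_notMem_nhdsNE z] with ζ hGζ hζ
    simp_all
  · have hS : (S : Set ℂ)ᶜ ∈ 𝓝 z := S.finite_toSet.isClosed.isOpen_compl.mem_nhds hz
    refine ((hf z hz).differentiableAt hS).congr_of_eventuallyEq ?_
    filter_upwards [hS] with ζ hζ
    simp_all

lemma exists_differentiable_eq_of_residue_eq_zero (S : Finset ℂ) {f : ℂ → ℂ}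
    (hf : DifferentiableOn ℂ f (S : Set ℂ)ᶜ)
    (hres : ∀ x ∈ S, ∃ g : ℂ → ℂ, DifferentiableOn ℂ g ((S : Set ℂ)ᶜ ∪ {x}) ∧ g x = 0 ∧
      ∀ ζ ∉ (S : Set ℂ), g ζ = (ζ - x) * f ζ) :
    ∃ F : ℂ → ℂ, Differentiable ℂ F ∧ ∀ ζ ∉ (S : Set ℂ), F ζ = f ζ := by
  refine exists_differentiable_eq_of_eventuallyEq S hf fun x hx => ?_
  obtain ⟨g, hg, hgx, hgf⟩ := hres x hx
  have hU : (S : Set ℂ)ᶜ ∪ {x} ∈ 𝓝 x := (S.isOpen_compl_union_singleton x).mem_nhds (by simp)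
  refine ⟨dslope g x, ((Complex.differentiableOn_dslope hU).2 hg).differentiableAt hU, ?_⟩
  filter_upwards [S.eventually_notMem_nhdsNE x, self_mem_nhdsWithin] with ζ hζ hne
  rw [dslope_of_ne _ hne, slope_def_field, hgx, hgf ζ hζ, sub_zero,
    mul_div_cancel_left₀ _ (sub_ne_zero.2 hne)]

lemma Matrix.tendsto_nhds_iff {α m n R : Type*} [TopologicalSpace R] {l : Filter α}
    {f : α → Matrix m n R} {M : Matrix m n R} :
    Tendsto f l (𝓝 M) ↔ ∀ i j, Tendsto (fun a => f a i j) l (𝓝 (M i j)) :=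
  tendsto_pi_nhds.trans (forall_congr' fun _ => tendsto_pi_nhds)

lemma mul_nilpotent_fin_two (M : Mat2) (a : ℂ) :
    M * !![0, a; 0, 0] = Matrix.of fun r => ![0, M r 0 * a] := by
  ext r s
  fin_cases s <;> simp [Matrix.mul_apply]

lemma asympId_iff {k : ℕ} {m : ℂ → Mat2} :
    AsympId k m ↔ ∀ r,
      Tendsto (fun ζ => m ζ r 0 * ζ⁻¹ ^ k) (cobounded ℂ) (𝓝 ((1 : Mat2) r 0)) ∧
      Tendsto (fun ζ => m ζ r 1 * ζ ^ k) (cobounded ℂ) (𝓝 ((1 : Mat2) r 1)) := by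
  simp [AsympId, Matrix.tendsto_nhds_iff, Matrix.mul_diagonal, Fin.forall_fin_two]

lemma SolvesDRHP.exists_differentiable_eq_col_zero {Z : Finset ℂ} {w m : ℂ → Mat2}
    (hm : SolvesDRHP Z w m) (hw : ∀ x ∈ Z, ∀ i, w x i 0 = 0) (r : Fin 2) :
    ∃ F : ℂ → ℂ, Differentiable ℂ F ∧ ∀ ζ ∉ (Z : Set ℂ), F ζ = m ζ r 0 := by
  refine exists_differentiable_eq_of_residue_eq_zero Z (hm.1 r 0) fun x hx => ?_
  obtain ⟨g, hg, hgm, hlim⟩ := hm.2 x hx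
  refine ⟨fun ζ => g ζ r 0, hg r 0, ?_, fun ζ hζ => by simp [hgm ζ hζ]⟩
  have hzero : ∀ ζ, (m ζ * w x) r 0 = 0 := fun ζ => by simp [Matrix.mul_apply, hw x hx]
  refine tendsto_nhds_unique (Matrix.tendsto_nhds_iff.1 hlim r 0) ?_
  simp [hzero]

lemma SolvesDRHP.exists_polynomial_col_zero {Z : Finset ℂ} {w m : ℂ → Mat2}
    (hm : SolvesDRHP Z w m) (hw : ∀ x ∈ Z, ∀ i, w x i 0 = 0) {r : Fin 2} {k : ℕ} {c : ℂ}
    (h : Tendsto (fun ζ => m ζ r 0 * ζ⁻¹ ^ k) (cobounded ℂ) (𝓝 c)) :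
    ∃ q : ℂ[X], q.natDegree ≤ k ∧ q.coeff k = c ∧ ∀ ζ ∉ (Z : Set ℂ), m ζ r 0 = q.eval ζ := by
  obtain ⟨F, hF, hFm⟩ := hm.exists_differentiable_eq_col_zero hw r
  have hFlim : Tendsto (fun ζ => F ζ * ζ⁻¹ ^ k) (cobounded ℂ) (𝓝 c) := by
    refine h.congr' ?_
    filter_upwards [Z.eventually_notMem_cobounded] with ζ hζ
    rw [hFm ζ hζ]
  obtain ⟨q, hq, hFq⟩ := hF.exists_polynomial_of_tendsto_mul_inv_pow hFlim
  refine ⟨q, hq, tendsto_nhds_unique (tendsto_eval_mul_inv_pow hq) ?_,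
    fun ζ hζ => by rw [← hFm ζ hζ, hFq]⟩
  simpa only [hFq] using hFlim

lemma Polynomial.Monic.degree_X_pow_sub_lt {R : Type*} [CommRing R] [Nontrivial R] {p : R[X]}
    (hp : p.Monic) : (X ^ p.natDegree - p).degree < (p.natDegree : WithBot ℕ) := by
  have := degree_sub_lt_left (p := X ^ p.natDegree) (q := p)
    (by rw [degree_X_pow, degree_eq_natDegree (Monic.ne_zero hp)]) (monic_X_pow _).ne_zero
    (by rw [leadingCoeff_X_pow, Monic.leadingCoeff hp])
  rwa [degree_X_pow] at this

section WeightedForm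

variable {N : ℕ} {π ω : ℕ → ℂ}

lemma ipC_comm (f g : ℂ[X]) : ipC N π ω f g = ipC N π ω g f := by
  simp only [ipC, mul_comm (f.eval _)]

variable (N π ω) in
def ipCRight (f : ℂ[X]) : ℂ[X] →ₗ[ℂ] ℂ where
  toFun := ipC N π ω f
  map_add' g h := by simp only [ipC, eval_add, mul_add, add_mul, Finset.sum_add_distrib]
  map_smul' c g := by
    simp only [ipC, eval_smul, smul_eq_mul, RingHom.id_apply, Finset.mul_sum]
    exact Finset.sum_congr rfl fun _ _ => by ring

lemma ipC_sub_right (f g g' : ℂ[X]) :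
    ipC N π ω f (g - g') = ipC N π ω f g - ipC N π ω f g' :=
  map_sub (ipCRight N π ω f) g g'

lemma ipC_sub_left (f f' g : ℂ[X]) :
    ipC N π ω (f - f') g = ipC N π ω f g - ipC N π ω f' g := by
  simp only [ipC_comm _ g, ipC_sub_right]

lemma ipC_C_mul_left (c : ℂ) (f g : ℂ[X]) :
    ipC N π ω (C c * f) g = c * ipC N π ω f g := by
  simp only [ipC_comm _ g, ← smul_eq_C_mul]
  exact map_smul (ipCRight N π ω g) c f

lemma ipC_eq_zero_of_degree_lt {f g : ℂ[X]} {n : ℕ} (hf : ∀ i < n, ipC N π ω f (X ^ i) = 0)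
    (hg : g.degree < n) : ipC N π ω f g = 0 := by
  classical
  have hspan : ℂ[X]_n ≤ LinearMap.ker (ipCRight N π ω f) := by
    rw [degreeLT_eq_span_X_pow, Submodule.span_le]
    intro p hp
    obtain ⟨i, hi, rfl⟩ := Finset.mem_image.1 hp
    exact hf i (Finset.mem_range.1 hi)
  exact hspan (mem_degreeLT.2 hg)

lemma eq_of_ipC_X_pow_eq (hnd : Nondeg N π ω) {n : ℕ} (hn : n ≤ N) {f f' : ℂ[X]}
    (hdeg : (f - f').degree ≤ n) (hmom : ∀ i ≤ n, ipC N π ω f (X ^ i) = ipC N π ω f' (X ^ i)) :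
    f = f' := by
  refine sub_eq_zero.1 (hnd n hn _ hdeg fun g hg => ipC_eq_zero_of_degree_lt (n := n + 1)
    (fun i hi => ?_) ?_)
  · rw [ipC_sub_left, hmom i (by omega), sub_self]
  · exact Order.lt_succ_of_le hg

end WeightedForm

section OrthogonalPolynomials

variable {N : ℕ} {π ω : ℕ → ℂ} {P : ℕ → ℂ[X]}

lemma ipC_P_X_pow_eq_zero (hPm : ∀ n ≤ N, (P n).Monic ∧ (P n).natDegree = n)
    (hPo : ∀ m ≤ N, ∀ n ≤ N, m ≠ n → ipC N π ω (P m) (P n) = 0) {n : ℕ} (hn : n ≤ N) :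
    ∀ i < n, ipC N π ω (P n) (X ^ i) = 0 := by
  intro i
  induction i using Nat.strong_induction_on with
  | _ i ih =>
    intro hi
    obtain ⟨hmonic, hdeg⟩ := hPm i (by omega)
    have hlt := Monic.degree_X_pow_sub_lt hmonic
    rw [hdeg] at hlt
    have hlow : ipC N π ω (P n) (X ^ i - P i) = 0 :=
      ipC_eq_zero_of_degree_lt (fun j hj => ih j hj (by omega)) hlt
    rwa [ipC_sub_right, hPo n hn i (by omega) (by omega), sub_zero] at hlow

lemma ipC_P_X_pow_self (hPm : ∀ n ≤ N, (P n).Monic ∧ (P n).natDegree = n)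
    (hPo : ∀ m ≤ N, ∀ n ≤ N, m ≠ n → ipC N π ω (P m) (P n) = 0) {n : ℕ} (hn : n ≤ N) :
    ipC N π ω (P n) (X ^ n) = ipC N π ω (P n) (P n) := by
  obtain ⟨hmonic, hdeg⟩ := hPm n hn
  have hlt := Monic.degree_X_pow_sub_lt hmonic
  rw [hdeg] at hlt
  have hlow : ipC N π ω (P n) (X ^ n - P n) = 0 :=
    ipC_eq_zero_of_degree_lt (ipC_P_X_pow_eq_zero hPm hPo hn) hlt
  rwa [ipC_sub_right, sub_eq_zero] at hlow

lemma ipC_P_self_ne_zero (hnd : Nondeg N π ω)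
    (hPm : ∀ n ≤ N, (P n).Monic ∧ (P n).natDegree = n)
    (hPo : ∀ m ≤ N, ∀ n ≤ N, m ≠ n → ipC N π ω (P m) (P n) = 0) {n : ℕ} (hn : n ≤ N) :
    ipC N π ω (P n) (P n) ≠ 0 := by
  intro h0
  obtain ⟨hmonic, hdeg⟩ := hPm n hn
  refine hmonic.ne_zero (hnd n hn _ (degree_le_of_natDegree_le hdeg.le) fun g hg =>
    ipC_eq_zero_of_degree_lt (n := n + 1) (fun i hi => ?_) (Order.lt_succ_of_le hg))
  rcases (Nat.lt_succ_iff.1 hi).lt_or_eq with hi | rfl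
  · exact ipC_P_X_pow_eq_zero hPm hPo hn i hi
  · rw [ipC_P_X_pow_self hPm hPo hn, h0]

end OrthogonalPolynomials

section CauchyTransform

variable (N : ℕ) (π ω : ℕ → ℂ)

def nodes : Finset ℂ := (Finset.range (N + 1)).image π

def cauchyTransform (q : ℂ[X]) (ζ : ℂ) : ℂ :=
  ∑ j ∈ Finset.range (N + 1), q.eval (π j) * ω j / (ζ - π j)

/-- `(ζ - π i) * cauchyTransform N π ω q ζ`, continued analytically to `ζ = π i`. -/
def subMulCauchyTransform (i : ℕ) (q : ℂ[X]) (ζ : ℂ) : ℂ :=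
  q.eval (π i) * ω i +
    ∑ j ∈ (Finset.range (N + 1)).erase i, (ζ - π i) * (q.eval (π j) * ω j / (ζ - π j))

/-- The polynomial part of `cauchyTransform N π ω q ζ * ζ ^ (n + 1)`. -/
def momentPoly (q : ℂ[X]) (n : ℕ) : ℂ[X] :=
  ∑ j ∈ Finset.range (n + 1), C (ipC N π ω q (X ^ (n - j))) * X ^ j

variable {N π ω}

lemma mem_nodes {x : ℂ} : x ∈ nodes N π ↔ ∃ i ≤ N, π i = x := by
  simp [nodes]

lemma sub_ne_zero_of_notMem_nodes {ζ : ℂ} (hζ : ζ ∉ (nodes N π : Set ℂ)) {j : ℕ}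
    (hj : j ∈ Finset.range (N + 1)) : ζ - π j ≠ 0 :=
  sub_ne_zero.2 fun h => hζ (h ▸ Finset.mem_image_of_mem π hj)

lemma differentiableOn_cauchyTransform (q : ℂ[X]) :
    DifferentiableOn ℂ (cauchyTransform N π ω q) (nodes N π : Set ℂ)ᶜ :=
  DifferentiableOn.fun_sum fun _ hj => (differentiableOn_const _).div
    (differentiableOn_id.sub (differentiableOn_const _))
    fun _ hζ => sub_ne_zero_of_notMem_nodes hζ hj

variable (N π ω) in
lemma tendsto_cauchyTransform_cobounded (q : ℂ[X]) :
    Tendsto (cauchyTransform N π ω q) (cobounded ℂ) (𝓝 0) := by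
  have hterm (a y : ℂ) : Tendsto (fun ζ : ℂ => a / (ζ - y)) (cobounded ℂ) (𝓝 0) := by
    have h := (tendsto_inv₀_cobounded.comp (tendsto_sub_const_cobounded y)).const_mul a
    simpa [div_eq_mul_inv] using h
  have hsum :=
    tendsto_finsetSum (Finset.range (N + 1)) fun j _ => hterm (q.eval (π j) * ω j) (π j)
  rwa [Finset.sum_const_zero] at hsum

lemma cauchyTransform_mul_pow (q : ℂ[X]) (n : ℕ) {ζ : ℂ} (hζ : ζ ∉ (nodes N π : Set ℂ)) :
    cauchyTransform N π ω q ζ * ζ ^ (n + 1) =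
      (momentPoly N π ω q n).eval ζ + cauchyTransform N π ω (q * X ^ (n + 1)) ζ := by
  have hnode : ∀ j ∈ Finset.range (N + 1),
      q.eval (π j) * ω j / (ζ - π j) * ζ ^ (n + 1) =
        ∑ i ∈ Finset.range (n + 1), q.eval (π j) * π j ^ (n - i) * ω j * ζ ^ i +
          (q * X ^ (n + 1)).eval (π j) * ω j / (ζ - π j) := by
    intro j hj
    have hgeom := geom_sum₂_mul ζ (π j) (n + 1)
    simp only [Nat.add_sub_cancel] at hgeom
    simp only [eval_mul, eval_pow, eval_X]
    have hsum : ∑ i ∈ Finset.range (n + 1), q.eval (π j) * π j ^ (n - i) * ω j * ζ ^ i =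
        q.eval (π j) * ω j * ∑ i ∈ Finset.range (n + 1), ζ ^ i * π j ^ (n - i) := by
      rw [Finset.mul_sum]
      exact Finset.sum_congr rfl fun _ _ => by ring
    rw [hsum]
    field_simp [sub_ne_zero_of_notMem_nodes hζ hj]
    linear_combination (-(q.eval (π j) * ω j)) * hgeom
  simp only [cauchyTransform, momentPoly, Finset.sum_mul, Finset.sum_congr rfl hnode,
    Finset.sum_add_distrib, eval_finsetSum, eval_mul, eval_C, eval_pow, eval_X, ipC]
  rw [Finset.sum_comm]

lemma coeff_momentPoly (q : ℂ[X]) (n j : ℕ) :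
    (momentPoly N π ω q n).coeff j = if j ≤ n then ipC N π ω q (X ^ (n - j)) else 0 := by
  simp [momentPoly]

lemma momentPoly_eq_C_iff {q : ℂ[X]} {n : ℕ} {b : ℂ} :
    momentPoly N π ω q n = C b ↔ ∀ i ≤ n, ipC N π ω q (X ^ i) = if i = n then b else 0 := by
  simp only [Polynomial.ext_iff, coeff_momentPoly, coeff_C]
  constructor
  · intro h i hi
    have := h (n - i)
    rw [if_pos (Nat.sub_le n i), Nat.sub_sub_self hi] at this
    rw [this]
    split_ifs <;> first | rfl | omega
  · intro h j
    by_cases hj : j ≤ n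
    · rw [if_pos hj, h _ (Nat.sub_le n j)]
      split_ifs <;> first | rfl | omega
    · rw [if_neg hj, if_neg (by omega)]

lemma tendsto_cauchyTransform_mul_pow_iff {q : ℂ[X]} {n : ℕ} {b : ℂ} :
    Tendsto (fun ζ => cauchyTransform N π ω q ζ * ζ ^ (n + 1)) (cobounded ℂ) (𝓝 b) ↔
      ∀ i ≤ n, ipC N π ω q (X ^ i) = if i = n then b else 0 := by
  have hrem : Tendsto (fun ζ => cauchyTransform N π ω q ζ * ζ ^ (n + 1) -
      (momentPoly N π ω q n).eval ζ) (cobounded ℂ) (𝓝 0) := by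
    refine (tendsto_cauchyTransform_cobounded N π ω (q * X ^ (n + 1))).congr' ?_
    filter_upwards [(nodes N π).eventually_notMem_cobounded] with ζ hζ
    rw [cauchyTransform_mul_pow q n hζ, add_sub_cancel_left]
  rw [← momentPoly_eq_C_iff]
  constructor
  · intro h
    exact eq_C_of_tendsto_cobounded (by simpa using h.sub hrem)
  · intro h
    simpa [h] using hrem.add_const b

lemma subMulCauchyTransform_eq {i : ℕ} (hi : i ≤ N) (q : ℂ[X]) {ζ : ℂ} (hζ : ζ ≠ π i) :
    subMulCauchyTransform N π ω i q ζ = (ζ - π i) * cauchyTransform N π ω q ζ := by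
  rw [subMulCauchyTransform, cauchyTransform, Finset.mul_sum,
    ← Finset.add_sum_erase _ _ (Finset.mem_range.2 (Nat.lt_succ_of_le hi)),
    mul_div_cancel₀ _ (sub_ne_zero.2 hζ)]

lemma subMulCauchyTransform_self (i : ℕ) (q : ℂ[X]) :
    subMulCauchyTransform N π ω i q (π i) = q.eval (π i) * ω i := by
  simp [subMulCauchyTransform]

lemma differentiableOn_subMulCauchyTransform (hπ : ∀ i ≤ N, ∀ j ≤ N, π i = π j → i = j)
    {i : ℕ} (hi : i ≤ N) (q : ℂ[X]) :
    DifferentiableOn ℂ (subMulCauchyTransform N π ω i q) ((nodes N π : Set ℂ)ᶜ ∪ {π i}) := by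
  refine (differentiableOn_const _).add (DifferentiableOn.fun_sum fun j hj => ?_)
  obtain ⟨hji, hj⟩ := Finset.mem_erase.1 hj
  refine (differentiableOn_id.sub (differentiableOn_const _)).mul
    ((differentiableOn_const _).div (differentiableOn_id.sub (differentiableOn_const _)) ?_)
  rintro ζ (hζ | rfl)
  · exact sub_ne_zero_of_notMem_nodes hζ hj
  · exact sub_ne_zero.2 fun h => hji (hπ j (by simpa [Nat.lt_succ_iff] using hj) i hi h.symm)

end CauchyTransform

section DRHP

variable {N : ℕ} {π ω : ℕ → ℂ}

lemma SolvesDRHP.eq_cauchyTransform_col_one (hπ : ∀ i ≤ N, ∀ j ≤ N, π i = π j → i = j)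
    {w m : ℂ → Mat2} (hw : ∀ i ≤ N, w (π i) = !![0, ω i; 0, 0])
    (hm : SolvesDRHP (nodes N π) w m) {r : Fin 2} {q : ℂ[X]}
    (hq : ∀ ζ ∉ (nodes N π : Set ℂ), m ζ r 0 = q.eval ζ)
    (h0 : Tendsto (fun ζ => m ζ r 1) (cobounded ℂ) (𝓝 0)) :
    ∀ ζ ∉ (nodes N π : Set ℂ), m ζ r 1 = cauchyTransform N π ω q ζ := by
  -- both `m · r 1` and the Cauchy transform of `q` have residue `q x * ω x` at each node `x`
  have hres : ∀ x ∈ nodes N π, ∃ g : ℂ → ℂ,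
      DifferentiableOn ℂ g ((nodes N π : Set ℂ)ᶜ ∪ {x}) ∧ g x = 0 ∧
      ∀ ζ ∉ (nodes N π : Set ℂ), g ζ = (ζ - x) * (m ζ r 1 - cauchyTransform N π ω q ζ) := by
    intro x hx
    obtain ⟨i, hi, rfl⟩ := mem_nodes.1 hx
    obtain ⟨g, hg, hgm, hlim⟩ := hm.2 _ hx
    refine ⟨fun ζ => g ζ r 1 - subMulCauchyTransform N π ω i q ζ,
      (hg r 1).sub (differentiableOn_subMulCauchyTransform hπ hi q), ?_, fun ζ hζ => ?_⟩
    · have hlim' : Tendsto (fun ζ => (m ζ * w (π i)) r 1) (𝓝[≠] π i)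
          (𝓝 (q.eval (π i) * ω i)) := by
        refine (((q.continuous.tendsto _).mul_const _).mono_left nhdsWithin_le_nhds).congr' ?_
        filter_upwards [(nodes N π).eventually_notMem_nhdsNE (π i)] with ζ hζ
        simp [hw i hi, mul_nilpotent_fin_two, hq ζ hζ]
      show g (π i) r 1 - subMulCauchyTransform N π ω i q (π i) = 0
      rw [subMulCauchyTransform_self, sub_eq_zero]
      exact tendsto_nhds_unique (Matrix.tendsto_nhds_iff.1 hlim r 1) hlim'
    · have hζi : ζ ≠ π i := fun h => hζ (h ▸ hx)
      simp [hgm ζ hζ, subMulCauchyTransform_eq hi q hζi, mul_sub]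
  obtain ⟨F, hF, hFeq⟩ := exists_differentiable_eq_of_residue_eq_zero (nodes N π)
    ((hm.1 r 1).sub (differentiableOn_cauchyTransform q)) hres
  have hFlim : Tendsto F (cobounded ℂ) (𝓝 0) := by
    have hlim := h0.sub (tendsto_cauchyTransform_cobounded N π ω q)
    rw [sub_zero] at hlim
    refine hlim.congr' ?_
    filter_upwards [(nodes N π).eventually_notMem_cobounded] with ζ hζ
    exact (hFeq ζ hζ).symm
  intro ζ hζ
  have hFζ := hFeq ζ hζ
  rw [hF.apply_eq_of_tendsto_cocompact ζ (Metric.cobounded_eq_cocompact (α := ℂ) ▸ hFlim)]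
    at hFζ
  exact sub_eq_zero.1 hFζ.symm

variable (N π ω) in
/-- The normalization at infinity of a row `(q, cauchyTransform N π ω q)` for `k = n + 1`:
`q ζ * ζ⁻¹ ^ (n + 1) → a` and `cauchyTransform N π ω q ζ * ζ ^ (n + 1) → b`. -/
def MomentCondition (n : ℕ) (a b : ℂ) (q : ℂ[X]) : Prop :=
  q.natDegree ≤ n + 1 ∧ q.coeff (n + 1) = a ∧
    ∀ i ≤ n, ipC N π ω q (X ^ i) = if i = n then b else 0

lemma MomentCondition.unique (hnd : Nondeg N π ω) {n : ℕ} (hn : n ≤ N) {a b : ℂ}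
    {q q' : ℂ[X]} (hq : MomentCondition N π ω n a b q) (hq' : MomentCondition N π ω n a b q') :
    q = q' := by
  refine eq_of_ipC_X_pow_eq hnd hn ?_ fun i hi => by rw [hq.2.2 i hi, hq'.2.2 i hi]
  rw [degree_le_iff_coeff_zero]
  intro j hj
  have hnj : n + 1 ≤ j := by exact_mod_cast hj
  rw [coeff_sub]
  rcases hnj.eq_or_lt with rfl | hlt
  · rw [hq.2.1, hq'.2.1, sub_self]
  · rw [coeff_eq_zero_of_natDegree_lt (hq.1.trans_lt hlt),
      coeff_eq_zero_of_natDegree_lt (hq'.1.trans_lt hlt), sub_self]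

lemma momentCondition_P_succ {P : ℕ → ℂ[X]}
    (hPm : ∀ n ≤ N, (P n).Monic ∧ (P n).natDegree = n)
    (hPo : ∀ m ≤ N, ∀ n ≤ N, m ≠ n → ipC N π ω (P m) (P n) = 0) {n : ℕ} (hn : n + 1 ≤ N) :
    MomentCondition N π ω n 1 0 (P (n + 1)) := by
  obtain ⟨hmonic, hdeg⟩ := hPm _ hn
  refine ⟨hdeg.le, by simpa [hdeg] using hmonic.coeff_natDegree, fun i hi => ?_⟩
  rw [ipC_P_X_pow_eq_zero hPm hPo hn i (by omega), ite_self]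

lemma momentCondition_C_inv_mul_P {P : ℕ → ℂ[X]} (hnd : Nondeg N π ω)
    (hPm : ∀ n ≤ N, (P n).Monic ∧ (P n).natDegree = n)
    (hPo : ∀ m ≤ N, ∀ n ≤ N, m ≠ n → ipC N π ω (P m) (P n) = 0) {n : ℕ} (hn : n ≤ N) :
    MomentCondition N π ω n 0 1 (C (ipC N π ω (P n) (P n))⁻¹ * P n) := by
  have hdeg := (hPm n hn).2
  refine ⟨natDegree_C_mul_le _ _ |>.trans (by omega), ?_, fun i hi => ?_⟩
  · rw [coeff_C_mul, coeff_eq_zero_of_natDegree_lt (by omega), mul_zero]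
  · rw [ipC_C_mul_left]
    rcases hi.lt_or_eq with hi | rfl
    · rw [ipC_P_X_pow_eq_zero hPm hPo hn i hi, mul_zero, if_neg hi.ne]
    · rw [ipC_P_X_pow_self hPm hPo hn, inv_mul_cancel₀ (ipC_P_self_ne_zero hnd hPm hPo hn),
        if_pos rfl]

variable (N π ω) in
def drhpSolution (q : Fin 2 → ℂ[X]) (ζ : ℂ) : Mat2 :=
  Matrix.of fun r => ![(q r).eval ζ, cauchyTransform N π ω (q r) ζ]

lemma solvesDRHP_drhpSolution (hπ : ∀ i ≤ N, ∀ j ≤ N, π i = π j → i = j) {w : ℂ → Mat2}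
    (hw : ∀ i ≤ N, w (π i) = !![0, ω i; 0, 0]) (q : Fin 2 → ℂ[X]) :
    SolvesDRHP (nodes N π) w (drhpSolution N π ω q) := by
  refine ⟨fun r s => ?_, fun x hx => ?_⟩
  · fin_cases s
    · simpa [drhpSolution] using (q r).differentiable.differentiableOn
    · simpa [drhpSolution] using differentiableOn_cauchyTransform (q r)
  obtain ⟨i, hi, rfl⟩ := mem_nodes.1 hx
  refine ⟨fun ζ => Matrix.of fun r =>
      ![(ζ - π i) * (q r).eval ζ, subMulCauchyTransform N π ω i (q r) ζ],
    fun r s => ?_, fun ζ hζ => ?_, ?_⟩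
  · fin_cases s
    · simpa using
        (differentiableOn_id.sub_const (π i)).fun_mul (q r).differentiable.differentiableOn
    · simpa using differentiableOn_subMulCauchyTransform hπ hi (q r)
  · have hζi : ζ ≠ π i := fun h => hζ (h ▸ hx)
    ext r s
    fin_cases s <;> simp [drhpSolution, subMulCauchyTransform_eq hi _ hζi]
  · rw [Matrix.tendsto_nhds_iff]
    intro r s
    fin_cases s
    · simp [drhpSolution, hw i hi, mul_nilpotent_fin_two]
    · simpa [drhpSolution, hw i hi, mul_nilpotent_fin_two, subMulCauchyTransform_self] using
        (((q r).continuous.tendsto _).mul_const (ω i)).mono_left nhdsWithin_le_nhds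

lemma asympId_drhpSolution {n : ℕ} {q : Fin 2 → ℂ[X]}
    (hq : ∀ r, MomentCondition N π ω n ((1 : Mat2) r 0) ((1 : Mat2) r 1) (q r)) :
    AsympId (n + 1) (drhpSolution N π ω q) := by
  refine asympId_iff.2 fun r => ?_
  obtain ⟨hdeg, hcoeff, hmom⟩ := hq r
  simp only [drhpSolution, Matrix.of_apply, Matrix.cons_val_zero, Matrix.cons_val_one]
  exact ⟨hcoeff ▸ tendsto_eval_mul_inv_pow hdeg, tendsto_cauchyTransform_mul_pow_iff.2 hmom⟩

lemma SolvesDRHP.exists_momentCondition (hπ : ∀ i ≤ N, ∀ j ≤ N, π i = π j → i = j)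
    {w m : ℂ → Mat2} (hw : ∀ i ≤ N, w (π i) = !![0, ω i; 0, 0])
    (hm : SolvesDRHP (nodes N π) w m) {n : ℕ} (ha : AsympId (n + 1) m) (r : Fin 2) :
    ∃ q, MomentCondition N π ω n ((1 : Mat2) r 0) ((1 : Mat2) r 1) q ∧
      ∀ ζ ∉ (nodes N π : Set ℂ),
        m ζ r 0 = q.eval ζ ∧ m ζ r 1 = cauchyTransform N π ω q ζ := by
  obtain ⟨h0, h1⟩ := asympId_iff.1 ha r
  have hw0 : ∀ x ∈ nodes N π, ∀ i, w x i 0 = 0 := by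
    intro x hx i
    obtain ⟨j, hj, rfl⟩ := mem_nodes.1 hx
    fin_cases i <;> simp [hw j hj]
  obtain ⟨q, hdeg, hcoeff, hq⟩ := hm.exists_polynomial_col_zero hw0 h0
  have hdecay : Tendsto (fun ζ => m ζ r 1) (cobounded ℂ) (𝓝 0) := by
    have := h1.mul (tendsto_inv_pow_cobounded (k := n + 1) (by omega))
    rw [mul_zero] at this
    refine this.congr' ?_
    filter_upwards [eventually_ne_cobounded 0] with ζ hζ
    rw [mul_assoc, ← mul_pow, mul_inv_cancel₀ hζ, one_pow, mul_one]
  have hcol := hm.eq_cauchyTransform_col_one hπ hw hq hdecay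
  refine ⟨q, ⟨hdeg, hcoeff, tendsto_cauchyTransform_mul_pow_iff.1 (h1.congr' ?_)⟩,
    fun ζ hζ => ⟨hq ζ hζ, hcol ζ hζ⟩⟩
  filter_upwards [(nodes N π).eventually_notMem_cobounded] with ζ hζ
  rw [hcol ζ hζ]

lemma SolvesDRHP.eq_drhpSolution (hnd : Nondeg N π ω)
    (hπ : ∀ i ≤ N, ∀ j ≤ N, π i = π j → i = j) {w m : ℂ → Mat2}
    (hw : ∀ i ≤ N, w (π i) = !![0, ω i; 0, 0]) {n : ℕ} (hn : n ≤ N) {q : Fin 2 → ℂ[X]}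
    (hq : ∀ r, MomentCondition N π ω n ((1 : Mat2) r 0) ((1 : Mat2) r 1) (q r))
    (hm : SolvesDRHP (nodes N π) w m) (ha : AsympId (n + 1) m) :
    ∀ ζ ∉ (nodes N π : Set ℂ), m ζ = drhpSolution N π ω q ζ := by
  intro ζ hζ
  ext r s
  obtain ⟨q', hq', hmq'⟩ := hm.exists_momentCondition hπ hw ha r
  obtain rfl := hq'.unique hnd hn (hq r)
  fin_cases s <;> simp [drhpSolution, hmq' ζ hζ]

end DRHP

/-- solution of the DRHP in terms of orthogonal polynomials. -/
theorem stmt1 (N : ℕ) (π : ℕ → ℂ)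
    (hπ : ∀ i ≤ N, ∀ j ≤ N, π i = π j → i = j)
    (ω : ℕ → ℂ) (hnd : Nondeg N π ω)
    (P : ℕ → Polynomial ℂ)
    (hPm : ∀ n ≤ N, (P n).Monic ∧ (P n).natDegree = n)
    (hPo : ∀ m ≤ N, ∀ n ≤ N, m ≠ n → ipC N π ω (P m) (P n) = 0)
    (w : ℂ → Mat2) (hw : ∀ x ≤ N, w (π x) = !![0, ω x; 0, 0])
    (k : ℕ) (hk1 : 1 ≤ k) (hkN : k ≤ N)
    (X : Finset ℂ) (hX : X = (Finset.range (N + 1)).image π) :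
    (∃ m : ℂ → Mat2, SolvesDRHP X w m ∧ AsympId k m ∧
      ∀ ζ ∉ (X : Set ℂ),
        m ζ 0 0 = (P k).eval ζ ∧
        m ζ 1 0 = (ipC N π ω (P (k - 1)) (P (k - 1)))⁻¹ * (P (k - 1)).eval ζ) ∧
    (∀ m m' : ℂ → Mat2, SolvesDRHP X w m → AsympId k m →
      SolvesDRHP X w m' → AsympId k m' → ∀ ζ ∉ (X : Set ℂ), m ζ = m' ζ) := by
  obtain ⟨n, rfl⟩ : ∃ n, k = n + 1 := ⟨k - 1, by omega⟩
  obtain rfl : X = nodes N π := hX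
  have hn : n ≤ N := by omega
  set q : Fin 2 → ℂ[X] := ![P (n + 1), C (ipC N π ω (P n) (P n))⁻¹ * P n]
  have hq : ∀ r, MomentCondition N π ω n ((1 : Mat2) r 0) ((1 : Mat2) r 1) (q r) :=
    Fin.forall_fin_two.2 ⟨by simpa [q] using momentCondition_P_succ hPm hPo hkN,
      by simpa [q] using momentCondition_C_inv_mul_P hnd hPm hPo hn⟩
  rw [Nat.add_sub_cancel]
  refine ⟨⟨drhpSolution N π ω q, solvesDRHP_drhpSolution hπ hw q, asympId_drhpSolution hq,
    fun ζ _ => by simp [drhpSolution, q]⟩, fun m m' hm ha hm' ha' ζ hζ => ?_⟩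
  rw [hm.eq_drhpSolution hnd hπ hw hn hq ha ζ hζ, hm'.eq_drhpSolution hnd hπ hw hn hq ha' ζ hζ]
end
end

section
/- In the Lax-pair setup with 1 ≤ k ≤ s ≤ N, let m be the solution of the discrete Riemann–Hilbert problem on {π_0,…,π_{s−1}} and m′ the solution on {π_0,…,π_s}, both with jump matrices w(π_x) = [[0, ω(x)],[0,0]] and asymptotics m(ζ)·diag(ζ^{−k},ζ^{k}) → I, m′(ζ)·diag(ζ^{−k},ζ^{k}) → I as ζ → ∞. Then the function ζ ↦ m(σζ)·D(ζ)·m′(ζ)^{−1}, where D(ζ) = diag(d_1(ζ), d_2(ζ)) (this function is defined off the finite set {π_0,…,π_s}, since det m′ ≡ 1 there), extends to a function M analytic on all of ℂ. -/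
/-!
Near a point `a` of the jump set, the residue condition with the nilpotent jump
`!![0, c; 0, 0]` forces `m ζ = (ζ - a)⁻¹ • R + H ζ` with `H` analytic at `a` and
`R = !![0, c * H a 0 0; 0, c * H a 1 0]`. In a product `A * X * B` of two such expansions
(with `X` analytic) the coefficient of `(ζ - a)⁻²` is `P * X * P'` and that of `(ζ - a)⁻¹`
vanishes at `a` as soon as `P * X a * G' a + G a * X a * P' = 0`; when both hold the product
has a removable singularity.

For `m * adj m` this makes `det m` entire; it tends to `1` at infinity, so `det m ≡ 1` by
Liouville and `m⁻¹ = adj m`. For `m (σ ζ) * D ζ * adj (m' ζ)` it gives removability at `π t`,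
`t ≥ 1`, where the `(ζ - π t)⁻¹` coefficient cancels because
`ω (t - 1) * d₂ (π t) = η * d₁ (π t) * ω t`, and at `π 0`, where `m ∘ σ` is regular and
`d₁ (π 0) = 0`.
-/

open Filter Topology Matrix Polynomial

noncomputable section

/-- The finite set `{π 0, …, π (s-1)}` regarded as a finite subset of `ℂ`. -/
def Zset (π : ℕ → ℝ) (s : ℕ) : Finset ℂ :=
  (Finset.range s).image fun x => (π x : ℂ)

theorem AnalyticAt.dslope {𝕜 E : Type*} [NontriviallyNormedField 𝕜] [NormedAddCommGroup E]
    [NormedSpace 𝕜 E] {f : 𝕜 → E} {b : 𝕜} (hf : AnalyticAt 𝕜 f b) :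
    AnalyticAt 𝕜 (dslope f b) b :=
  let ⟨_, hp⟩ := hf
  ⟨_, hp.has_fpower_series_dslope_fslope⟩

theorem Set.Finite.eventually_nhdsNE_notMem {X : Type*} [TopologicalSpace X] [T1Space X]
    {S : Set X} (hS : S.Finite) (x : X) : ∀ᶠ y in 𝓝[≠] x, y ∉ S :=
  have := hS.to_subtype
  Filter.mem_of_superset (nhdsNE_of_nhdsNE_sdiff_finite univ_mem this) fun _ h => h.2

theorem exists_differentiable_eq_of_removable {𝕜 E : Type*} [NontriviallyNormedField 𝕜]
    [NormedAddCommGroup E] [NormedSpace 𝕜 E] {S : Set 𝕜} (hS : S.Finite) {f : 𝕜 → E}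
    (hf : ∀ z ∉ S, DifferentiableAt 𝕜 f z)
    (hrem : ∀ x ∈ S, ∃ g : 𝕜 → E, DifferentiableAt 𝕜 g x ∧ g =ᶠ[𝓝[≠] x] f) :
    ∃ G : 𝕜 → E, Differentiable 𝕜 G ∧ ∀ z ∉ S, G z = f z := by
  classical
  choose g hg hgf using hrem
  refine ⟨fun z => if hz : z ∈ S then g z hz z else f z, fun z => ?_, fun z hz => dif_neg hz⟩
  by_cases hz : z ∈ S
  · refine (hg z hz).congr_of_eventuallyEq (eventuallyEq_nhds_of_eventuallyEq_nhdsNE ?_ ?_)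
    · filter_upwards [hS.eventually_nhdsNE_notMem z, hgf z hz] with ζ hζS hζ
      simp [hζS, hζ]
    · simp [hz]
  · refine (hf z hz).congr_of_eventuallyEq ?_
    filter_upwards [hS.isClosed.isOpen_compl.mem_nhds hz] with ζ hζ
    exact dif_neg hζ

section Entrywise

variable {ι κ μ : Type*}

def EntryAnalyticAt (A : ℂ → Matrix ι κ ℂ) (b : ℂ) : Prop :=
  ∀ i j, AnalyticAt ℂ (fun ζ => A ζ i j) b

theorem EntryDiffOn.entryAnalyticAt {A : ℂ → Mat2} {U : Set ℂ} {z : ℂ} (hA : EntryDiffOn A U)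
    (hU : U ∈ 𝓝 z) : EntryAnalyticAt A z :=
  fun i j => (hA i j).analyticAt hU

theorem EntryAnalyticAt.add {A B : ℂ → Matrix ι κ ℂ} {b : ℂ} (hA : EntryAnalyticAt A b)
    (hB : EntryAnalyticAt B b) : EntryAnalyticAt (fun ζ => A ζ + B ζ) b :=
  fun i j => (hA i j).add (hB i j)

theorem EntryAnalyticAt.mul [Fintype κ] {A : ℂ → Matrix ι κ ℂ} {B : ℂ → Matrix κ μ ℂ} {b : ℂ}
    (hA : EntryAnalyticAt A b) (hB : EntryAnalyticAt B b) :
    EntryAnalyticAt (fun ζ => A ζ * B ζ) b := fun i j => by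
  simp only [Matrix.mul_apply]
  exact Finset.analyticAt_fun_sum _ fun k _ => (hA i k).mul (hB k j)

theorem EntryAnalyticAt.comp {A : ℂ → Matrix ι κ ℂ} {σ : ℂ → ℂ} {b : ℂ}
    (hA : EntryAnalyticAt A (σ b)) (hσ : AnalyticAt ℂ σ b) :
    EntryAnalyticAt (fun ζ => A (σ ζ)) b :=
  fun i j => (hA i j).comp hσ

theorem EntryAnalyticAt.adjugate {A : ℂ → Mat2} {b : ℂ} (hA : EntryAnalyticAt A b) :
    EntryAnalyticAt (fun ζ => (A ζ).adjugate) b := by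
  intro i j
  fin_cases i <;> fin_cases j <;> simp [Matrix.adjugate_fin_two, hA 0 0, hA 1 1] <;>
    exact (hA _ _).neg

theorem entryAnalyticAt_diagonal {d₁ d₂ : ℂ → ℂ} {b : ℂ} (h₁ : AnalyticAt ℂ d₁ b)
    (h₂ : AnalyticAt ℂ d₂ b) : EntryAnalyticAt (fun ζ => diagonal ![d₁ ζ, d₂ ζ]) b := by
  intro i j
  fin_cases i <;> fin_cases j <;> simp [h₁, h₂, analyticAt_const]

theorem entryAnalyticAt_const (A : Matrix ι κ ℂ) (b : ℂ) : EntryAnalyticAt (fun _ => A) b :=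
  fun _ _ => analyticAt_const

theorem EntryAnalyticAt.exists_eq_inv_sub_smul_sub {Q : ℂ → Matrix ι κ ℂ} {b : ℂ}
    (hQ : EntryAnalyticAt Q b) :
    ∃ E, EntryAnalyticAt E b ∧ ∀ ζ ≠ b, E ζ = (ζ - b)⁻¹ • (Q ζ - Q b) :=
  ⟨fun ζ => Matrix.of fun i j => dslope (fun z => Q z i j) b ζ, fun i j => (hQ i j).dslope,
    fun ζ hζ => by ext i j; simp [dslope_of_ne _ hζ, slope_def_module]⟩

def IsRemovableAt (F : ℂ → Matrix ι κ ℂ) (b : ℂ) : Prop :=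
  ∃ E, EntryAnalyticAt E b ∧ E =ᶠ[𝓝[≠] b] F

def HasSimplePoleAt (A : ℂ → Matrix ι κ ℂ) (a : ℂ) (R : Matrix ι κ ℂ) (H : ℂ → Matrix ι κ ℂ) :
    Prop :=
  EntryAnalyticAt H a ∧ ∀ᶠ ζ in 𝓝[≠] a, A ζ = (ζ - a)⁻¹ • R + H ζ

theorem EntryAnalyticAt.hasSimplePoleAt {A : ℂ → Matrix ι κ ℂ} {a : ℂ}
    (hA : EntryAnalyticAt A a) : HasSimplePoleAt A a 0 A :=
  ⟨hA, Eventually.of_forall fun ζ => by simp⟩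

theorem HasSimplePoleAt.comp_affine {A : ℂ → Matrix ι κ ℂ} {R : Matrix ι κ ℂ}
    {H : ℂ → Matrix ι κ ℂ} {η c₀ b : ℂ} (hA : HasSimplePoleAt A (η * b + c₀) R H) (hη : η ≠ 0) :
    HasSimplePoleAt (fun ζ => A (η * ζ + c₀)) b (η⁻¹ • R) (fun ζ => H (η * ζ + c₀)) := by
  have hσ : Tendsto (fun ζ => η * ζ + c₀) (𝓝[≠] b) (𝓝[≠] (η * b + c₀)) :=
    tendsto_nhdsWithin_of_tendsto_nhds_of_eventually_within _
      ((Continuous.tendsto (by fun_prop) b).mono_left nhdsWithin_le_nhds)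
      (eventually_nhdsWithin_of_forall fun ζ hζ => by simpa [hη] using hζ)
  refine ⟨hA.1.comp (σ := fun ζ => η * ζ + c₀) (by fun_prop),
    (hσ.eventually hA.2).mono fun ζ hζ => ?_⟩
  dsimp only
  rw [hζ, show η * ζ + c₀ - (η * b + c₀) = η * (ζ - b) by ring, mul_inv, mul_comm, mul_smul]

theorem Matrix.adjugate_fin_two_add (A B : Mat2) : (A + B).adjugate = A.adjugate + B.adjugate := by
  simp only [Matrix.adjugate_fin_two]
  ext i j
  fin_cases i <;> fin_cases j <;> simp <;> ring

theorem HasSimplePoleAt.adjugate {A : ℂ → Mat2} {R : Mat2} {H : ℂ → Mat2} {a : ℂ}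
    (hA : HasSimplePoleAt A a R H) :
    HasSimplePoleAt (fun ζ => (A ζ).adjugate) a R.adjugate (fun ζ => (H ζ).adjugate) :=
  ⟨hA.1.adjugate, hA.2.mono fun ζ hζ => by
    dsimp only; rw [hζ, Matrix.adjugate_fin_two_add, Matrix.adjugate_smul]; simp⟩

theorem HasSimplePoleAt.isRemovableAt_mul_mul {ν : Type*} [Fintype κ] [Fintype μ]
    {A : ℂ → Matrix ι κ ℂ} {X : ℂ → Matrix κ μ ℂ} {B : ℂ → Matrix μ ν ℂ} {b : ℂ}
    {P : Matrix ι κ ℂ} {P' : Matrix μ ν ℂ} {G : ℂ → Matrix ι κ ℂ} {G' : ℂ → Matrix μ ν ℂ}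
    (hA : HasSimplePoleAt A b P G) (hX : EntryAnalyticAt X b) (hB : HasSimplePoleAt B b P' G')
    (hPP' : ∀ ζ, P * X ζ * P' = 0) (hres : P * X b * G' b + G b * X b * P' = 0) :
    IsRemovableAt (fun ζ => A ζ * X ζ * B ζ) b := by
  set Q := fun ζ => P * X ζ * G' ζ + G ζ * X ζ * P' with hQ_def
  have hQ : EntryAnalyticAt Q b :=
    (((entryAnalyticAt_const P b).mul hX).mul hB.1).add
      ((hA.1.mul hX).mul (entryAnalyticAt_const P' b))
  obtain ⟨E, hE, hEQ⟩ := hQ.exists_eq_inv_sub_smul_sub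
  refine ⟨fun ζ => E ζ + G ζ * X ζ * G' ζ, hE.add ((hA.1.mul hX).mul hB.1), ?_⟩
  filter_upwards [hA.2, hB.2, self_mem_nhdsWithin] with ζ hAζ hBζ hζ
  have hQb : Q b = 0 := hres
  calc E ζ + G ζ * X ζ * G' ζ
      = (ζ - b)⁻¹ • ((ζ - b)⁻¹ • (P * X ζ * P') + Q ζ) + G ζ * X ζ * G' ζ := by
        rw [hEQ ζ hζ, hPP', hQb, smul_zero, zero_add, sub_zero]
    _ = A ζ * X ζ * B ζ := by
        rw [hAζ, hBζ]
        simp only [hQ_def, Matrix.add_mul, Matrix.mul_add, Matrix.smul_mul, Matrix.mul_smul,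
          smul_add, smul_smul]
        abel

end Entrywise

section Residue

variable {ι κ : Type*}

theorem exists_hasSimplePoleAt_of_eq_smul {A g : ℂ → Matrix ι κ ℂ} {a : ℂ}
    (hg : EntryAnalyticAt g a) (hgA : ∀ᶠ ζ in 𝓝[≠] a, g ζ = (ζ - a) • A ζ) :
    ∃ H, HasSimplePoleAt A a (g a) H := by
  obtain ⟨H, hH, hHg⟩ := hg.exists_eq_inv_sub_smul_sub
  refine ⟨H, hH, ?_⟩
  filter_upwards [hgA, self_mem_nhdsWithin] with ζ hζ hζa
  rw [hHg ζ hζa, hζ, smul_sub, smul_smul, inv_mul_cancel₀ (sub_ne_zero.mpr hζa), one_smul,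
    add_sub_cancel]

theorem Filter.Tendsto.matrix_elem {α R : Type*} [TopologicalSpace R] {l : Filter α}
    {f : α → Matrix ι κ R} {A : Matrix ι κ R} (h : Tendsto f l (𝓝 A)) (i : ι) (j : κ) :
    Tendsto (fun x => f x i j) l (𝓝 (A i j)) :=
  ((continuous_id.matrix_elem i j).tendsto A).comp h

theorem HasSimplePoleAt.residue_eq_of_tendsto {A : ℂ → Mat2} {a c : ℂ} {R : Mat2}
    {H : ℂ → Mat2} (hA : HasSimplePoleAt A a R H)
    (hR : Tendsto (fun ζ => A ζ * !![0, c; 0, 0]) (𝓝[≠] a) (𝓝 R)) :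
    R = !![0, c * H a 0 0; 0, c * H a 1 0] := by
  have hentry : ∀ i j, Tendsto (fun ζ => (A ζ * !![0, c; 0, 0]) i j) (𝓝[≠] a) (𝓝 (R i j)) :=
    hR.matrix_elem
  have hcol0 : ∀ i, R i 0 = 0 := fun i =>
    tendsto_nhds_unique (hentry i 0) (by simp [Matrix.mul_apply, Fin.sum_univ_two])
  have hH : ∀ i, Tendsto (fun ζ => A ζ i 0) (𝓝[≠] a) (𝓝 (H a i 0)) := fun i => by
    refine ((hA.1 i 0).continuousAt.tendsto.mono_left nhdsWithin_le_nhds).congr' ?_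
    filter_upwards [hA.2] with ζ hζ
    simp [hζ, hcol0 i]
  have hcol1 : ∀ i, R i 1 = c * H a i 0 := fun i =>
    tendsto_nhds_unique (hentry i 1) <| by
      simpa [Matrix.mul_apply, Fin.sum_univ_two, mul_comm] using (hH i).const_mul c
  ext i j
  fin_cases i <;> fin_cases j <;> simp [hcol0, hcol1]

theorem SolvesDRHP.entryAnalyticAt {Z : Finset ℂ} {w m : ℂ → Mat2} (hm : SolvesDRHP Z w m)
    {z : ℂ} (hz : z ∉ (Z : Set ℂ)) : EntryAnalyticAt m z :=
  hm.1.entryAnalyticAt (Z.finite_toSet.isClosed.compl_mem_nhds hz)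

theorem SolvesDRHP.hasSimplePoleAt {Z : Finset ℂ} {w m : ℂ → Mat2} (hm : SolvesDRHP Z w m)
    {a c : ℂ} (ha : a ∈ Z) (hwa : w a = !![0, c; 0, 0]) :
    ∃ H : ℂ → Mat2, HasSimplePoleAt m a !![0, c * H a 0 0; 0, c * H a 1 0] H := by
  obtain ⟨g, hgd, hgm, hgt⟩ := hm.2 a ha
  have hnhds : ((Z : Set ℂ))ᶜ ∪ {a} ∈ 𝓝 a :=
    Filter.mem_of_superset ((Z.finite_toSet.sdiff (t := {a})).isClosed.compl_mem_nhds (by simp))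
      fun ζ hζ => by by_cases h : ζ = a <;> simp_all
  obtain ⟨H, hpole⟩ := exists_hasSimplePoleAt_of_eq_smul (A := m) (hgd.entryAnalyticAt hnhds)
    ((Z.finite_toSet.eventually_nhdsNE_notMem a).mono fun ζ hζ => hgm ζ hζ)
  refine ⟨H, hpole.residue_eq_of_tendsto ?_ ▸ hpole⟩
  rwa [← hwa]

end Residue

theorem exists_entire_eq_of_isRemovableAt {ι κ : Type*} {S : Set ℂ} (hS : S.Finite)
    {F : ℂ → Matrix ι κ ℂ} (hF : ∀ z ∉ S, EntryAnalyticAt F z)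
    (hrem : ∀ x ∈ S, IsRemovableAt F x) :
    ∃ M : ℂ → Matrix ι κ ℂ, (∀ i j, Differentiable ℂ fun ζ => M ζ i j) ∧
      ∀ ζ ∉ S, M ζ = F ζ := by
  have hentry (i : ι) (j : κ) :
      ∃ G : ℂ → ℂ, Differentiable ℂ G ∧ ∀ ζ ∉ S, G ζ = F ζ i j := by
    refine exists_differentiable_eq_of_removable hS (fun z hz => (hF z hz i j).differentiableAt)
      fun x hx => ?_
    obtain ⟨E, hE, hEF⟩ := hrem x hx
    exact ⟨fun ζ => E ζ i j, (hE i j).differentiableAt, hEF.mono fun ζ h => congrArg (· i j) h⟩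
  choose G hG hGF using hentry
  exact ⟨fun ζ => Matrix.of fun i j => G i j ζ, hG, fun ζ hζ => by ext i j; exact hGF i j ζ hζ⟩

theorem residue_mul_diagonal_mul_adjugate_residue (p q p' q' u v : ℂ) :
    !![0, p; 0, q] * diagonal ![u, v] * !![0, p'; 0, q'].adjugate = 0 := by
  rw [Matrix.diagonal_fin_two, Matrix.adjugate_fin_two_of, Matrix.mul_fin_two, Matrix.mul_fin_two]
  ext i j
  fin_cases i <;> fin_cases j <;> simp

theorem HasSimplePoleAt.isRemovableAt_mul_one_mul_adjugate {m H : ℂ → Mat2} {a c : ℂ}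
    (hm : HasSimplePoleAt m a !![0, c * H a 0 0; 0, c * H a 1 0] H) :
    IsRemovableAt (fun ζ => m ζ * 1 * (m ζ).adjugate) a := by
  refine hm.isRemovableAt_mul_mul (entryAnalyticAt_const 1 a) hm.adjugate (fun _ => ?_) ?_
  · rw [Matrix.mul_one, Matrix.adjugate_fin_two_of, Matrix.mul_fin_two]
    ext i j
    fin_cases i <;> fin_cases j <;> simp
  · rw [Matrix.eta_fin_two (H a), Matrix.adjugate_fin_two_of, Matrix.adjugate_fin_two_of]
    simp only [Matrix.mul_one, Matrix.mul_fin_two]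
    ext i j
    fin_cases i <;> fin_cases j <;> simp <;> ring

theorem SolvesDRHP.det_eq_one {Z : Finset ℂ} {w m : ℂ → Mat2} {k : ℕ} (hm : SolvesDRHP Z w m)
    (hma : AsympId k m) (hw : ∀ x ∈ Z, ∃ c, w x = !![0, c; 0, 0]) :
    ∀ ζ ∉ (Z : Set ℂ), (m ζ).det = 1 := by
  have hZ : ((Z : Set ℂ))ᶜ ∈ Bornology.cobounded ℂ := Z.finite_toSet.isBounded
  obtain ⟨M, hM, hMm⟩ := exists_entire_eq_of_isRemovableAt Z.finite_toSet
    (F := fun ζ => m ζ * 1 * (m ζ).adjugate)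
    (fun z hz => ((hm.entryAnalyticAt hz).mul (entryAnalyticAt_const 1 z)).mul
      (hm.entryAnalyticAt hz).adjugate)
    fun x hx => by
      obtain ⟨c, hc⟩ := hw x hx
      obtain ⟨H, hH⟩ := hm.hasSimplePoleAt hx hc
      exact hH.isRemovableAt_mul_one_mul_adjugate
  have hMdet : ∀ ζ ∉ (Z : Set ℂ), M ζ 0 0 = (m ζ).det := fun ζ hζ => by
    simp [hMm ζ hζ, Matrix.mul_adjugate]
  have hlim : Tendsto (fun ζ => M ζ 0 0) (Bornology.cobounded ℂ) (𝓝 1) := by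
    have hdet : Tendsto (fun ζ => (m ζ * diagonal ![ζ⁻¹ ^ k, ζ ^ k]).det)
        (Bornology.cobounded ℂ) (𝓝 1) := by
      simpa only [Function.comp_def, id, Matrix.det_one] using
        ((continuous_id.matrix_det).tendsto 1).comp hma
    refine hdet.congr' ?_
    filter_upwards [hZ, Bornology.isBounded_def.1 (Bornology.isBounded_singleton (x := (0 : ℂ)))]
      with ζ hζZ hζ0
    rw [Matrix.det_mul, Matrix.det_diagonal, Fin.prod_univ_two, hMdet ζ hζZ]
    simp_all
  intro ζ hζ
  rw [← hMdet ζ hζ]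
  exact (hM 0 0).apply_eq_of_tendsto_cocompact ζ (by rwa [← Metric.cobounded_eq_cocompact])

theorem HasSimplePoleAt.isRemovableAt_affine_mul_diagonal_mul_adjugate {m m' H H' : ℂ → Mat2}
    {d₁ d₂ : ℂ → ℂ} {η c₀ a b c c' : ℂ} (hη : η ≠ 0) (hab : η * b + c₀ = a)
    (hm : HasSimplePoleAt m a !![0, c * H a 0 0; 0, c * H a 1 0] H)
    (hm' : HasSimplePoleAt m' b !![0, c' * H' b 0 0; 0, c' * H' b 1 0] H')
    (hd₁ : AnalyticAt ℂ d₁ b) (hd₂ : AnalyticAt ℂ d₂ b) (hrel : c * d₂ b = η * d₁ b * c') :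
    IsRemovableAt (fun ζ => m (η * ζ + c₀) * diagonal ![d₁ ζ, d₂ ζ] * (m' ζ).adjugate) b := by
  subst hab
  refine (hm.comp_affine hη).isRemovableAt_mul_mul (entryAnalyticAt_diagonal hd₁ hd₂)
    hm'.adjugate (fun ζ => ?_) ?_
  · rw [Matrix.smul_mul, Matrix.smul_mul, residue_mul_diagonal_mul_adjugate_residue, smul_zero]
  · have hrel' : η⁻¹ * c * d₂ b = d₁ b * c' := by
      field_simp
      linear_combination hrel
    rw [Matrix.eta_fin_two (H' b), Matrix.eta_fin_two (H (η * b + c₀)),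
      Matrix.adjugate_fin_two_of, Matrix.adjugate_fin_two_of, Matrix.diagonal_fin_two]
    simp only [Matrix.smul_of, Matrix.smul_cons, Matrix.smul_empty, Matrix.mul_fin_two]
    ext i j
    fin_cases i <;> fin_cases j <;> simp
    · linear_combination -(H (η * b + c₀) 0 0 * H' b 1 0) * hrel'
    · linear_combination H (η * b + c₀) 0 0 * H' b 0 0 * hrel'
    · linear_combination -(H (η * b + c₀) 1 0 * H' b 1 0) * hrel'
    · linear_combination H (η * b + c₀) 1 0 * H' b 0 0 * hrel'

theorem EntryAnalyticAt.isRemovableAt_mul_diagonal_mul_adjugate {A m' H' : ℂ → Mat2}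
    {d₁ d₂ : ℂ → ℂ} {b c' : ℂ} (hA : EntryAnalyticAt A b)
    (hm' : HasSimplePoleAt m' b !![0, c' * H' b 0 0; 0, c' * H' b 1 0] H')
    (hd₁ : AnalyticAt ℂ d₁ b) (hd₂ : AnalyticAt ℂ d₂ b) (hd₁b : d₁ b = 0) :
    IsRemovableAt (fun ζ => A ζ * diagonal ![d₁ ζ, d₂ ζ] * (m' ζ).adjugate) b := by
  refine hA.hasSimplePoleAt.isRemovableAt_mul_mul (entryAnalyticAt_diagonal hd₁ hd₂)
    hm'.adjugate (fun ζ => by simp) ?_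
  rw [Matrix.eta_fin_two (A b), Matrix.adjugate_fin_two_of, Matrix.diagonal_fin_two]
  simp only [hd₁b, Matrix.mul_fin_two]
  ext i j
  fin_cases i <;> fin_cases j <;> simp

theorem mem_Zset {π : ℕ → ℝ} {s : ℕ} {x : ℂ} : x ∈ Zset π s ↔ ∃ u < s, (π u : ℂ) = x := by
  simp [Zset]

theorem eq_of_affine_mem_Zset {N s : ℕ} {π : ℕ → ℝ} {η c₀ ζ : ℂ} (hη : η ≠ 0) (hsN : s ≤ N)
    (hσπ : ∀ x < N, η * (π (x + 1) : ℂ) + c₀ = π x) (hζ : η * ζ + c₀ ∈ Zset π s) :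
    ∃ u < s, ζ = π (u + 1) := by
  obtain ⟨u, hu, hπu⟩ := mem_Zset.1 hζ
  refine ⟨u, hu, mul_left_cancel₀ hη (add_right_cancel (b := c₀) ?_)⟩
  rw [hσπ u (by omega), hπu]

theorem affine_notMem_Zset {N s : ℕ} {π : ℕ → ℝ} {η c₀ ζ : ℂ} (hη : η ≠ 0) (hsN : s ≤ N)
    (hσπ : ∀ x < N, η * (π (x + 1) : ℂ) + c₀ = π x) (hζ : ζ ∉ (Zset π (s + 1) : Set ℂ)) :
    η * ζ + c₀ ∉ (Zset π s : Set ℂ) := fun h => by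
  obtain ⟨u, hu, rfl⟩ := eq_of_affine_mem_Zset hη hsN hσπ h
  exact hζ (mem_Zset.2 ⟨u + 1, by omega, rfl⟩)

theorem affine_zero_notMem_Zset {N s : ℕ} {π : ℕ → ℝ} {η c₀ : ℂ} (hη : η ≠ 0) (hsN : s ≤ N)
    (hσπ : ∀ x < N, η * (π (x + 1) : ℂ) + c₀ = π x)
    (hπ : ∀ i ≤ N, ∀ j ≤ N, π i = π j → i = j) :
    η * (π 0 : ℂ) + c₀ ∉ (Zset π s : Set ℂ) := fun h => by
  obtain ⟨u, hu, hπu⟩ := eq_of_affine_mem_Zset hη hsN hσπ h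
  have := hπ 0 (by omega) (u + 1) (by omega) (by exact_mod_cast hπu)
  omega

theorem stmt3_general (N k s : ℕ) (hsN : s ≤ N)
    (π ω : ℕ → ℝ)
    (hπ : ∀ i ≤ N, ∀ j ≤ N, π i = π j → i = j)
    (hω : ∀ x ≤ N, 0 < ω x)
    (η c₀ : ℂ) (hη : η ≠ 0)
    (σ : ℂ → ℂ) (hσ : ∀ ζ, σ ζ = η * ζ + c₀)
    (hσπ : ∀ x < N, σ (π (x + 1) : ℂ) = (π x : ℂ))
    (d₁ d₂ : ℂ → ℂ) (hd₁ : Differentiable ℂ d₁) (hd₂ : Differentiable ℂ d₂)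
    (hd₁0 : d₁ (π 0 : ℂ) = 0)
    (hd : ∀ x, 1 ≤ x → x ≤ N → d₂ (π x : ℂ) ≠ 0 ∧
      (ω (x - 1) : ℂ) / (ω x : ℂ) = η * d₁ (π x : ℂ) / d₂ (π x : ℂ))
    (w : ℂ → Mat2) (hw : ∀ x ≤ N, w (π x : ℂ) = !![0, (ω x : ℂ); 0, 0])
    (m m' : ℂ → Mat2)
    (hm : SolvesDRHP (Zset π s) w m)
    (hm' : SolvesDRHP (Zset π (s + 1)) w m') (hm'a : AsympId k m') :
    ∃ M : ℂ → Mat2, (∀ i j, Differentiable ℂ fun ζ => M ζ i j) ∧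
      ∀ ζ : ℂ, ζ ∉ (Zset π (s + 1) : Set ℂ) →
        M ζ = m (σ ζ) * Matrix.diagonal ![d₁ ζ, d₂ ζ] * (m' ζ)⁻¹ := by
  obtain rfl : σ = fun ζ => η * ζ + c₀ := funext hσ
  have hmσ {z : ℂ} (hz : η * z + c₀ ∉ (Zset π s : Set ℂ)) :
      EntryAnalyticAt (fun ζ => m (η * ζ + c₀)) z :=
    EntryAnalyticAt.comp (σ := fun ζ => η * ζ + c₀) (hm.entryAnalyticAt hz) (by fun_prop)
  set F : ℂ → Mat2 := fun ζ => m (η * ζ + c₀) * diagonal ![d₁ ζ, d₂ ζ] * (m' ζ).adjugate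
  have hF (z : ℂ) (hz : z ∉ (Zset π (s + 1) : Set ℂ)) : EntryAnalyticAt F z :=
    ((hmσ (affine_notMem_Zset hη hsN hσπ hz)).mul (entryAnalyticAt_diagonal
      (hd₁.analyticAt z) (hd₂.analyticAt z))).mul (hm'.entryAnalyticAt hz).adjugate
  have hFrem (x : ℂ) (hx : x ∈ (Zset π (s + 1) : Set ℂ)) : IsRemovableAt F x := by
    obtain ⟨t, ht, rfl⟩ := mem_Zset.1 hx
    obtain ⟨H', hH'⟩ := hm'.hasSimplePoleAt hx (hw t (by omega))
    rcases t with _ | u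
    · exact (hmσ (affine_zero_notMem_Zset hη hsN hσπ hπ)).isRemovableAt_mul_diagonal_mul_adjugate
        hH' (hd₁.analyticAt _) (hd₂.analyticAt _) hd₁0
    · obtain ⟨H, hH⟩ := hm.hasSimplePoleAt (mem_Zset.2 ⟨u, by omega, rfl⟩) (hw u (by omega))
      obtain ⟨hd₂ne, hratio⟩ := hd (u + 1) (by omega) (by omega)
      rw [Nat.add_sub_cancel, div_eq_div_iff (by exact_mod_cast (hω _ (by omega)).ne') hd₂ne]
        at hratio
      exact hH.isRemovableAt_affine_mul_diagonal_mul_adjugate hη (hσπ u (by omega)) hH'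
        (hd₁.analyticAt _) (hd₂.analyticAt _) (by linear_combination hratio)
  have hdet (ζ : ℂ) (hζ : ζ ∉ (Zset π (s + 1) : Set ℂ)) : (m' ζ).det = 1 :=
    hm'.det_eq_one hm'a (fun x hx => by
      obtain ⟨t, ht, rfl⟩ := mem_Zset.1 hx
      exact ⟨_, hw t (by omega)⟩) ζ hζ
  obtain ⟨M, hM, hMF⟩ := exists_entire_eq_of_isRemovableAt (Zset π (s + 1)).finite_toSet hF hFrem
  refine ⟨M, hM, fun ζ hζ => ?_⟩
  rw [hMF ζ hζ, Matrix.inv_def, hdet ζ hζ, Ring.inverse_one, one_smul]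

/-- the second equation of the Lax pair; `m(σζ) D(ζ) m′(ζ)⁻¹` extends to an
entire (matrix-valued) function. -/
theorem stmt3 (N k s : ℕ) (hk1 : 1 ≤ k) (hks : k ≤ s) (hsN : s ≤ N)
    (π ω : ℕ → ℝ)
    (hπ : ∀ i ≤ N, ∀ j ≤ N, π i = π j → i = j)
    (hω : ∀ x ≤ N, 0 < ω x)
    (η c₀ : ℂ) (hη : η ≠ 0)
    (σ : ℂ → ℂ) (hσ : ∀ ζ, σ ζ = η * ζ + c₀)
    (hσπ : ∀ x < N, σ (π (x + 1) : ℂ) = (π x : ℂ))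
    (d₁ d₂ : ℂ → ℂ) (hd₁ : Differentiable ℂ d₁) (hd₂ : Differentiable ℂ d₂)
    (hd₁0 : d₁ (π 0 : ℂ) = 0)
    (hd : ∀ x, 1 ≤ x → x ≤ N → d₂ (π x : ℂ) ≠ 0 ∧
      (ω (x - 1) : ℂ) / (ω x : ℂ) = η * d₁ (π x : ℂ) / d₂ (π x : ℂ))
    (w : ℂ → Mat2) (hw : ∀ x ≤ N, w (π x : ℂ) = !![0, (ω x : ℂ); 0, 0])
    (m m' : ℂ → Mat2)
    (hm : SolvesDRHP (Zset π s) w m) (hma : AsympId k m)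
    (hm' : SolvesDRHP (Zset π (s + 1)) w m') (hm'a : AsympId k m') :
    ∃ M : ℂ → Mat2, (∀ i j, Differentiable ℂ fun ζ => M ζ i j) ∧
      ∀ ζ : ℂ, ζ ∉ (Zset π (s + 1) : Set ℂ) →
        M ζ = m (σ ζ) * Matrix.diagonal ![d₁ ζ, d₂ ζ] * (m' ζ)⁻¹ :=
  stmt3_general N k s hsN π ω hπ hω η c₀ hη σ hσ hσπ d₁ d₂ hd₁ hd₂ hd₁0 hd w hw m m' hm hm' hm'a
end
end

section
/- In the Lax-pair setup with 1 ≤ k ≤ s ≤ N, suppose in addition that d_1 and d_2 are polynomials of degree at most n, with λ_1 and λ_2 the coefficients of ζ^n in d_1 and d_2 respectively. Let m, m′ be the solutions of the discrete Riemann–Hilbert problems on {π_0,…,π_{s−1}} and on {π_0,…,π_s} with jump matrices w(π_x) = [[0, ω(x)],[0,0]] and asymptotics m(ζ)·diag(ζ^{−k},ζ^{k}) → I, m′(ζ)·diag(ζ^{−k},ζ^{k}) → I as ζ → ∞, and let M be the entire extension of ζ ↦ m(σζ)·D(ζ)·m′(ζ)^{−1}, D(ζ) = diag(d_1(ζ),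 d_2(ζ)). Then M is a matrix polynomial in ζ of degree at most n, i.e. M(ζ) = Σ_{i=0}^{n} M^{(i)} ζ^i for constant matrices M^{(i)}, and its coefficient of ζ^n is M^{(n)} = diag(η^{k}λ_1, η^{−k}λ_2). -/
/-!
An entire `f` with `ζ⁻¹ ^ n * f ζ → c` at infinity is a polynomial of degree `≤ n` with
`ζ ^ n`-coefficient `c`: for `n = 0` this is Liouville's theorem, and `f = f 0 + ζ * dslope f 0`
passes the hypothesis on to `dslope f 0` with `n - 1`. So it suffices to find the limit of
`ζ⁻¹ ^ n • M ζ`. With `Λ ζ = diag(ζ⁻¹ ^ k, ζ ^ k)`, off the poles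
`ζ⁻¹ ^ n • M ζ = (m (σ ζ) * Λ (σ ζ)) * diag((σ ζ / ζ) ^ k * ζ⁻¹ ^ n * d₁ ζ,`
`(ζ / σ ζ) ^ k * ζ⁻¹ ^ n * d₂ ζ) * (m' ζ * Λ ζ)⁻¹`, and as `σ ζ → ∞` and `σ ζ / ζ → η` the three
factors tend to `1`, `diag(η ^ k * λ₁, η⁻¹ ^ k * λ₂)` and `1`.
-/

open Filter Topology Matrix Polynomial

noncomputable section

open Bornology

theorem Polynomial.tendsto_inv_pow_mul_eval_cobounded {p : ℂ[X]} {n : ℕ} (hp : p.natDegree ≤ n) :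
    Tendsto (fun ζ : ℂ => ζ⁻¹ ^ n * p.eval ζ) (cobounded ℂ) (𝓝 (p.coeff n)) := by
  have hlim : Tendsto (fun ζ : ℂ => (p.reflect n).eval ζ⁻¹) (cobounded ℂ) (𝓝 (p.coeff n)) := by
    have := ((p.reflect n).continuous.tendsto 0).comp (tendsto_inv₀_cobounded (α := ℂ))
    simpa [Function.comp_def, ← coeff_zero_eq_eval_zero, coeff_reflect] using this
  refine hlim.congr' ?_
  filter_upwards [eventually_ne_cobounded 0] with ζ hζ
  have := invertibleOfNonzero hζ
  have h := eval₂_reflect_mul_pow (RingHom.id ℂ) ζ n p hp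
  rw [invOf_eq_inv, ← eval, ← eval] at h
  rw [← h, mul_comm, mul_assoc, ← mul_pow, mul_inv_cancel₀ hζ, one_pow, mul_one]

theorem Differentiable.exists_polynomial_of_tendsto_inv_pow_mul {f : ℂ → ℂ}
    (hf : Differentiable ℂ f) {n : ℕ} {c : ℂ}
    (h : Tendsto (fun ζ => ζ⁻¹ ^ n * f ζ) (cobounded ℂ) (𝓝 c)) :
    ∃ p : ℂ[X], p.natDegree ≤ n ∧ p.coeff n = c ∧ ∀ ζ, f ζ = p.eval ζ := by
  induction n generalizing f c with
  | zero =>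
    have hc : Tendsto f (cocompact ℂ) (𝓝 c) := by
      simpa [← Metric.cobounded_eq_cocompact] using h
    exact ⟨C c, by simp, by simp, fun ζ => by simpa using hf.apply_eq_of_tendsto_cocompact ζ hc⟩
  | succ n ih =>
    set g := dslope f 0
    have hg : Differentiable ℂ g :=
      differentiableOn_univ.1 ((Complex.differentiableOn_dslope univ_mem).2 hf.differentiableOn)
    have hfg (ζ : ℂ) : f ζ = f 0 + ζ * g ζ := by
      have := sub_smul_dslope f 0 ζ
      rw [sub_zero, smul_eq_mul] at this
      linear_combination -this
    have hgc : Tendsto (fun ζ => ζ⁻¹ ^ n * g ζ) (cobounded ℂ) (𝓝 c) := by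
      have h0 := ((tendsto_inv₀_cobounded (α := ℂ)).pow (n + 1)).mul_const (f 0)
      refine (by simpa using h.sub h0 : Tendsto _ _ (𝓝 c)).congr' ?_
      filter_upwards [eventually_ne_cobounded 0] with ζ hζ
      rw [hfg ζ, mul_add, add_sub_cancel_left, pow_succ, mul_inv, mul_assoc,
        inv_mul_cancel_left₀ hζ, inv_pow]
    obtain ⟨q, hqdeg, hqc, hq⟩ := ih hg hgc
    refine ⟨C (f 0) + X * q, ?_, by simp [coeff_X_mul, hqc], fun ζ => by simp [hfg ζ, hq ζ]⟩
    refine (natDegree_add_le _ _).trans (max_le (by simp) ?_)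
    exact natDegree_mul_le.trans (by rw [natDegree_X]; omega)

theorem Filter.Tendsto.matrix_inv {α 𝕜 n : Type*} [NormedField 𝕜] [Fintype n] [DecidableEq n]
    {l : Filter α} {f : α → Matrix n n 𝕜} {A : Matrix n n 𝕜} (h : Tendsto f l (𝓝 A))
    (hA : A.det ≠ 0) : Tendsto (fun x => (f x)⁻¹) l (𝓝 A⁻¹) := by
  refine (continuousAt_matrix_inv A ?_).tendsto.comp h
  rw [Ring.inverse_eq_inv']
  exact continuousAt_inv₀ hA

theorem tendsto_affine_cobounded {𝕜 : Type*} [NormedField 𝕜] {η : 𝕜} (hη : η ≠ 0) (c₀ : 𝕜) :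
    Tendsto (fun ζ => η * ζ + c₀) (cobounded 𝕜) (cobounded 𝕜) :=
  (tendsto_add_const_cobounded c₀).comp (tendsto_mul_left_cobounded hη)

theorem tendsto_affine_div_cobounded {𝕜 : Type*} [NormedField 𝕜] (η c₀ : 𝕜) :
    Tendsto (fun ζ => (η * ζ + c₀) / ζ) (cobounded 𝕜) (𝓝 η) := by
  have h := tendsto_const_nhds (x := η) |>.add (tendsto_inv₀_cobounded.const_mul c₀)
  rw [mul_zero, add_zero] at h
  refine h.congr' ?_
  filter_upwards [eventually_ne_cobounded 0] with ζ hζ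
  field_simp

theorem smul_mul_diagonal_mul_inv_eq {K : Type*} [Field K] {A B : Matrix (Fin 2) (Fin 2) K}
    {a z : K} (ha : a ≠ 0) (hz : z ≠ 0) (k : ℕ) (c d₁ d₂ : K) :
    c • (A * diagonal ![d₁, d₂] * B⁻¹) =
      A * diagonal ![a⁻¹ ^ k, a ^ k] * diagonal ![(a / z) ^ k * (c * d₁), (z / a) ^ k * (c * d₂)] *
        (B * diagonal ![z⁻¹ ^ k, z ^ k])⁻¹ := by
  have hinv : (diagonal ![z⁻¹ ^ k, z ^ k])⁻¹ = diagonal ![z ^ k, z⁻¹ ^ k] := by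
    refine inv_eq_left_inv ?_
    rw [diagonal_mul_diagonal, ← diagonal_one]
    congr 1
    ext i
    fin_cases i <;> simp [hz]
  have hmid : diagonal ![a⁻¹ ^ k, a ^ k] *
      diagonal ![(a / z) ^ k * (c * d₁), (z / a) ^ k * (c * d₂)] * diagonal ![z ^ k, z⁻¹ ^ k] =
      c • diagonal ![d₁, d₂] := by
    rw [diagonal_mul_diagonal, diagonal_mul_diagonal, ← diagonal_smul]
    congr 1
    ext i
    fin_cases i <;> simp [div_pow] <;> field_simp
  rw [Matrix.mul_inv_rev, hinv, ← smul_mul_assoc, ← mul_smul_comm, ← hmid]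
  simp only [Matrix.mul_assoc]

theorem tendsto_diagonal_ratio_pow_mul_inv_pow_mul_eval {η : ℂ} (hη : η ≠ 0) (c₀ : ℂ)
    {k n : ℕ} {p₁ p₂ : ℂ[X]} (hp₁ : p₁.natDegree ≤ n) (hp₂ : p₂.natDegree ≤ n) :
    Tendsto (fun ζ => diagonal ![((η * ζ + c₀) / ζ) ^ k * (ζ⁻¹ ^ n * p₁.eval ζ),
      (ζ / (η * ζ + c₀)) ^ k * (ζ⁻¹ ^ n * p₂.eval ζ)]) (cobounded ℂ)
      (𝓝 (diagonal ![η ^ k * p₁.coeff n, η⁻¹ ^ k * p₂.coeff n])) := by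
  have hratio := tendsto_affine_div_cobounded η c₀
  have hratio_inv : Tendsto (fun ζ => ζ / (η * ζ + c₀)) (cobounded ℂ) (𝓝 η⁻¹) :=
    (hratio.inv₀ hη).congr fun ζ => inv_div _ _
  refine (continuous_id.matrix_diagonal.tendsto _).comp <|
    ((hratio.pow k).mul (tendsto_inv_pow_mul_eval_cobounded hp₁)).matrixVecCons <|
    ((hratio_inv.pow k).mul (tendsto_inv_pow_mul_eval_cobounded hp₂)).matrixVecCons
      tendsto_const_nhds

theorem exists_sum_pow_smul_eq_of_tendsto_inv_pow_smul {ι κ : Type*} {M : ℂ → Matrix ι κ ℂ}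
    (hM : ∀ i j, Differentiable ℂ fun ζ => M ζ i j) {n : ℕ} {A : Matrix ι κ ℂ}
    (h : Tendsto (fun ζ => ζ⁻¹ ^ n • M ζ) (cobounded ℂ) (𝓝 A)) :
    ∃ Mc : ℕ → Matrix ι κ ℂ, (∀ ζ, M ζ = ∑ i ∈ Finset.range (n + 1), ζ ^ i • Mc i) ∧ Mc n = A := by
  have hentry (i : ι) (j : κ) :
      Tendsto (fun ζ => ζ⁻¹ ^ n * M ζ i j) (cobounded ℂ) (𝓝 (A i j)) :=
    tendsto_pi_nhds.1 (tendsto_pi_nhds.1 h i) j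
  choose P hdeg hcoeff heval using fun i j =>
    (hM i j).exists_polynomial_of_tendsto_inv_pow_mul (hentry i j)
  refine ⟨fun t => Matrix.of fun i j => (P i j).coeff t, fun ζ => ?_, by ext i j; exact hcoeff i j⟩
  ext i j
  simp [heval, eval_eq_sum_range' (Nat.lt_succ_of_le (hdeg i j)), Matrix.sum_apply, mul_comm]

theorem stmt4_general (k s : ℕ)
    (π : ℕ → ℝ)
    (η c₀ : ℂ) (hη : η ≠ 0)
    (σ : ℂ → ℂ) (hσ : ∀ ζ, σ ζ = η * ζ + c₀)
    (d₁ d₂ : ℂ → ℂ)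
    (n : ℕ) (p₁ p₂ : Polynomial ℂ)
    (hd₁p : ∀ ζ, d₁ ζ = p₁.eval ζ) (hd₂p : ∀ ζ, d₂ ζ = p₂.eval ζ)
    (hdeg₁ : p₁.degree ≤ (n : ℕ)) (hdeg₂ : p₂.degree ≤ (n : ℕ))
    (m m' : ℂ → Mat2)
    (hma : AsympId k m)
    (hm'a : AsympId k m')
    (M : ℂ → Mat2) (hMdiff : ∀ i j, Differentiable ℂ fun ζ => M ζ i j)
    (hMeq : ∀ ζ : ℂ, ζ ∉ (Zset π (s + 1) : Set ℂ) →
      M ζ = m (σ ζ) * Matrix.diagonal ![d₁ ζ, d₂ ζ] * (m' ζ)⁻¹) :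
    ∃ Mc : ℕ → Mat2,
      (∀ ζ : ℂ, M ζ = ∑ i ∈ Finset.range (n + 1), ζ ^ i • Mc i) ∧
      Mc n = Matrix.diagonal ![η ^ k * p₁.coeff n, η⁻¹ ^ k * p₂.coeff n] := by
  obtain rfl : σ = fun ζ => η * ζ + c₀ := funext hσ
  obtain rfl : d₁ = fun ζ => p₁.eval ζ := funext hd₁p
  obtain rfl : d₂ = fun ζ => p₂.eval ζ := funext hd₂p
  have hσ_cob := tendsto_affine_cobounded hη c₀
  have hmσ := hma.comp hσ_cob
  have hm'_inv : Tendsto (fun ζ => (m' ζ * diagonal ![ζ⁻¹ ^ k, ζ ^ k])⁻¹) (cobounded ℂ) (𝓝 1) := by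
    simpa using hm'a.matrix_inv (by simp)
  have hmid := tendsto_diagonal_ratio_pow_mul_inv_pow_mul_eval (k := k) hη c₀
    (natDegree_le_iff_degree_le.2 hdeg₁) (natDegree_le_iff_degree_le.2 hdeg₂)
  have hlim := (hmσ.mul hmid).mul hm'_inv
  rw [one_mul, mul_one] at hlim
  refine exists_sum_pow_smul_eq_of_tendsto_inv_pow_smul hMdiff (hlim.congr' ?_)
  filter_upwards [eventually_ne_cobounded 0, hσ_cob.eventually (eventually_ne_cobounded 0),
    le_cofinite ℂ (Zset π (s + 1)).finite_toSet.compl_mem_cofinite] with ζ hζ hσζ hZ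
  rw [hMeq ζ hZ, smul_mul_diagonal_mul_inv_eq hσζ hζ]
  rfl

/-- if `d₁, d₂` are polynomials of degree at most `n`, the entire extension `M`
of `m(σζ) D(ζ) m′(ζ)⁻¹` is a matrix polynomial of degree at most `n` whose coefficient of
`ζ^n` is `diag(η^k λ₁, η^{-k} λ₂)`. -/
theorem stmt4 (N k s : ℕ) (hk1 : 1 ≤ k) (hks : k ≤ s) (hsN : s ≤ N)
    (π ω : ℕ → ℝ)
    (hπ : ∀ i ≤ N, ∀ j ≤ N, π i = π j → i = j)
    (hω : ∀ x ≤ N, 0 < ω x)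
    (η c₀ : ℂ) (hη : η ≠ 0)
    (σ : ℂ → ℂ) (hσ : ∀ ζ, σ ζ = η * ζ + c₀)
    (hσπ : ∀ x < N, σ (π (x + 1) : ℂ) = (π x : ℂ))
    (d₁ d₂ : ℂ → ℂ)
    (n : ℕ) (p₁ p₂ : Polynomial ℂ)
    (hd₁p : ∀ ζ, d₁ ζ = p₁.eval ζ) (hd₂p : ∀ ζ, d₂ ζ = p₂.eval ζ)
    (hdeg₁ : p₁.degree ≤ (n : ℕ)) (hdeg₂ : p₂.degree ≤ (n : ℕ))
    (hd₁0 : d₁ (π 0 : ℂ) = 0)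
    (hd : ∀ x, 1 ≤ x → x ≤ N → d₂ (π x : ℂ) ≠ 0 ∧
      (ω (x - 1) : ℂ) / (ω x : ℂ) = η * d₁ (π x : ℂ) / d₂ (π x : ℂ))
    (w : ℂ → Mat2) (hw : ∀ x ≤ N, w (π x : ℂ) = !![0, (ω x : ℂ); 0, 0])
    (m m' : ℂ → Mat2)
    (hm : SolvesDRHP (Zset π s) w m) (hma : AsympId k m)
    (hm' : SolvesDRHP (Zset π (s + 1)) w m') (hm'a : AsympId k m')
    (M : ℂ → Mat2) (hMdiff : ∀ i j, Differentiable ℂ fun ζ => M ζ i j)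
    (hMeq : ∀ ζ : ℂ, ζ ∉ (Zset π (s + 1) : Set ℂ) →
      M ζ = m (σ ζ) * Matrix.diagonal ![d₁ ζ, d₂ ζ] * (m' ζ)⁻¹) :
    ∃ Mc : ℕ → Mat2,
      (∀ ζ : ℂ, M ζ = ∑ i ∈ Finset.range (n + 1), ζ ^ i • Mc i) ∧
      Mc n = Matrix.diagonal ![η ^ k * p₁.coeff n, η⁻¹ ^ k * p₂.coeff n] :=
  stmt4_general k s π η c₀ hη σ hσ d₁ d₂ n p₁ p₂ hd₁p hd₂p hdeg₁ hdeg₂ m m' hma hm'a M hMdiff hMeq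
end
end

section
/- In the Lax-pair setup, fix k ≤ s ≤ N−1. For t = s, s+1, s+2 let m_t be the solution of the discrete Riemann–Hilbert problem on {π_0,…,π_{t−1}} with jump matrices w(π_x) = [[0, ω(x)],[0,0]] and asymptotics m_t(ζ)·diag(ζ^{−k},ζ^{k}) → I as ζ → ∞. Let A_s, A_{s+1} be the matrices with A_s² = A_{s+1}² = 0, m_{s+1}(ζ) = (I + (ζ−π_s)^{−1}A_s)·m_s(ζ) and m_{s+2}(ζ) = (I + (ζ−π_{s+1})^{−1}A_{s+1})·m_{s+1}(ζ), and let M_s, M_{s+1} be the entire extensions of ζ ↦ m_s(σζ)·D(ζ)·m_{s+1}(ζ)^{−1} and ζ ↦ m_{s+1}(σζ)·D(ζ)·m_{s+2}(ζ)^{−1}, where D(ζ) = diag(d_1(ζ), d_2(ζ)). Then for every ζ ∈ ℂ with ζ ≠ π_{s+1}: (I + (σζ−π_s)^{−1}A_s)·M_s(ζ) = M_{s+1}(ζ)·(I + (ζ−π_{s+1})^{−1}A_{s+1}). -/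
open Filter Topology Matrix Polynomial

noncomputable section

/- The affine shift σ carries the pole π_{s+1} of the right-hand gauge factor to the pole π_s of
the left-hand one, so both sides are continuous on ℂ ∖ {π_{s+1}}. Away from finitely many points
the defining formulas for M_s, M_{s+1}, m_{s+1}, m_{s+2} all hold, and there both sides equal
m_{s+1}(σζ) D(ζ) m_{s+1}(ζ)⁻¹, because the gauge factor I + (ζ - π_{s+1})⁻¹ A_{s+1} is invertible
(A_{s+1} being nilpotent). Continuity then gives equality on all of ℂ ∖ {π_{s+1}}. -/

theorem ContinuousAt.eq_of_eventuallyEq_cofinite {X Y : Type*} [TopologicalSpace X] [T1Space X]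
    [TopologicalSpace Y] [T2Space Y] {f g : X → Y} {x : X} [(𝓝[≠] x).NeBot]
    (hf : ContinuousAt f x) (hg : ContinuousAt g x) (hfg : f =ᶠ[cofinite] g) : f x = g x :=
  ((hf.eventuallyEq_nhds_iff_eventuallyEq_nhdsNE hg).1
    (hfg.filter_mono (nhdsNE_le_cofinite x))).eq_of_nhds

namespace Matrix

variable {n R : Type*} [Fintype n] [DecidableEq n] [CommRing R]

theorem inv_mul_left_mul_self {U : Matrix n n R} (hU : IsUnit U) (Q : Matrix n n R) :
    (U * Q)⁻¹ * U = Q⁻¹ := by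
  rw [mul_inv_rev, mul_assoc, nonsing_inv_mul U ((isUnit_iff_isUnit_det U).1 hU), mul_one]

theorem mul_mul_mul_inv_eq_of_isUnit {U : Matrix n n R} (hU : IsUnit U) (X P D Q : Matrix n n R) :
    X * (P * D * Q⁻¹) = X * P * D * (U * Q)⁻¹ * U := by
  rw [mul_assoc _ (U * Q)⁻¹, inv_mul_left_mul_self hU]
  simp only [mul_assoc]

theorem isUnit_one_add_smul_of_mul_self_eq_zero {A : Matrix n n R} (hA : A * A = 0) (c : R) :
    IsUnit (1 + c • A) := by
  have hA_nil : IsNilpotent A := ⟨2, by rw [pow_two, hA]⟩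
  exact (hA_nil.smul c).isUnit_one_add

end Matrix

theorem Zset_mono (π : ℕ → ℝ) {s t : ℕ} (hst : s ≤ t) : Zset π s ⊆ Zset π t := by
  unfold Zset
  exact Finset.image_subset_image (Finset.range_subset_range.2 hst)

theorem stmt8_general (N s : ℕ) (hsN : s + 1 ≤ N)
    (π : ℕ → ℝ)
    (η c₀ : ℂ) (hη : η ≠ 0)
    (σ : ℂ → ℂ) (hσ : ∀ ζ, σ ζ = η * ζ + c₀)
    (hσπ : ∀ x < N, σ (π (x + 1) : ℂ) = (π x : ℂ))
    (d₁ d₂ : ℂ → ℂ)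
    (m₀ m₁ m₂ : ℂ → Mat2)
    (A A' : Mat2) (hA'2 : A' * A' = 0)
    (hrel : ∀ ζ : ℂ, ζ ∉ (Zset π (s + 1) : Set ℂ) →
      m₁ ζ = (1 + (ζ - (π s : ℂ))⁻¹ • A) * m₀ ζ)
    (hrel' : ∀ ζ : ℂ, ζ ∉ (Zset π (s + 2) : Set ℂ) →
      m₂ ζ = (1 + (ζ - (π (s + 1) : ℂ))⁻¹ • A') * m₁ ζ)
    (M M' : ℂ → Mat2)
    (hMdiff : ∀ i j, Differentiable ℂ fun ζ => M ζ i j)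
    (hMeq : ∀ ζ : ℂ, ζ ∉ (Zset π (s + 1) : Set ℂ) →
      M ζ = m₀ (σ ζ) * Matrix.diagonal ![d₁ ζ, d₂ ζ] * (m₁ ζ)⁻¹)
    (hM'diff : ∀ i j, Differentiable ℂ fun ζ => M' ζ i j)
    (hM'eq : ∀ ζ : ℂ, ζ ∉ (Zset π (s + 2) : Set ℂ) →
      M' ζ = m₁ (σ ζ) * Matrix.diagonal ![d₁ ζ, d₂ ζ] * (m₂ ζ)⁻¹) :
    ∀ ζ : ℂ, ζ ≠ (π (s + 1) : ℂ) →
      (1 + (σ ζ - (π s : ℂ))⁻¹ • A) * M ζ =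
        M' ζ * (1 + (ζ - (π (s + 1) : ℂ))⁻¹ • A') := by
  intro ζ hζ
  have hσ_eq : σ = fun z => η * z + c₀ := funext hσ
  have hσ_sub : σ ζ - π s = η * (ζ - π (s + 1)) := by
    rw [← hσπ s hsN, hσ_eq]; ring
  have hσ_inj : Function.Injective σ := fun a b h => by
    simpa [hσ_eq, hη] using h
  have hσ_cont : Continuous σ := hσ_eq ▸ by fun_prop
  have hM_cont : Continuous M := continuous_matrix fun i j => (hMdiff i j).continuous
  have hM'_cont : Continuous M' := continuous_matrix fun i j => (hM'diff i j).continuous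
  have hS : ((Zset π (s + 2) : Set ℂ) ∪ σ ⁻¹' Zset π (s + 1)).Finite :=
    (Zset π (s + 2)).finite_toSet.union ((Zset π (s + 1)).finite_toSet.preimage hσ_inj.injOn)
  refine ContinuousAt.eq_of_eventuallyEq_cofinite
    (f := fun z => (1 + (σ z - π s)⁻¹ • A) * M z)
    (g := fun z => M' z * (1 + (z - π (s + 1))⁻¹ • A')) ?_ ?_ ?_
  · have : σ ζ - π s ≠ 0 := by rw [hσ_sub]; exact mul_ne_zero hη (sub_ne_zero.2 hζ)
    fun_prop (disch := assumption)
  · have : ζ - π (s + 1) ≠ 0 := sub_ne_zero.2 hζ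
    fun_prop (disch := assumption)
  · filter_upwards [hS.compl_mem_cofinite] with z hz
    simp only [Set.mem_compl_iff, Set.mem_union, Set.mem_preimage, not_or] at hz
    rw [hMeq z fun h => hz.1 (Zset_mono π (by omega) h), hM'eq z hz.1, hrel (σ z) hz.2,
      hrel' z hz.1]
    exact Matrix.mul_mul_mul_inv_eq_of_isUnit
      (Matrix.isUnit_one_add_smul_of_mul_self_eq_zero hA'2 _) _ _ _ _

/-- the compatibility condition for the Lax pair,
`(I + (σζ−π_s)⁻¹ A_s) M_s(ζ) = M_{s+1}(ζ) (I + (ζ−π_{s+1})⁻¹ A_{s+1})`. -/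
theorem stmt8 (N k s : ℕ) (hk1 : 1 ≤ k) (hks : k ≤ s) (hsN : s + 1 ≤ N)
    (π ω : ℕ → ℝ)
    (hπ : ∀ i ≤ N, ∀ j ≤ N, π i = π j → i = j)
    (hω : ∀ x ≤ N, 0 < ω x)
    (η c₀ : ℂ) (hη : η ≠ 0)
    (σ : ℂ → ℂ) (hσ : ∀ ζ, σ ζ = η * ζ + c₀)
    (hσπ : ∀ x < N, σ (π (x + 1) : ℂ) = (π x : ℂ))
    (d₁ d₂ : ℂ → ℂ) (hd₁ : Differentiable ℂ d₁) (hd₂ : Differentiable ℂ d₂)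
    (hd₁0 : d₁ (π 0 : ℂ) = 0)
    (hd : ∀ x, 1 ≤ x → x ≤ N → d₂ (π x : ℂ) ≠ 0 ∧
      (ω (x - 1) : ℂ) / (ω x : ℂ) = η * d₁ (π x : ℂ) / d₂ (π x : ℂ))
    (w : ℂ → Mat2) (hw : ∀ x ≤ N, w (π x : ℂ) = !![0, (ω x : ℂ); 0, 0])
    (m₀ m₁ m₂ : ℂ → Mat2)
    (hm₀ : SolvesDRHP (Zset π s) w m₀) (hm₀a : AsympId k m₀)
    (hm₁ : SolvesDRHP (Zset π (s + 1)) w m₁) (hm₁a : AsympId k m₁)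
    (hm₂ : SolvesDRHP (Zset π (s + 2)) w m₂) (hm₂a : AsympId k m₂)
    (A A' : Mat2) (hA2 : A * A = 0) (hA'2 : A' * A' = 0)
    (hrel : ∀ ζ : ℂ, ζ ∉ (Zset π (s + 1) : Set ℂ) →
      m₁ ζ = (1 + (ζ - (π s : ℂ))⁻¹ • A) * m₀ ζ)
    (hrel' : ∀ ζ : ℂ, ζ ∉ (Zset π (s + 2) : Set ℂ) →
      m₂ ζ = (1 + (ζ - (π (s + 1) : ℂ))⁻¹ • A') * m₁ ζ)
    (M M' : ℂ → Mat2)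
    (hMdiff : ∀ i j, Differentiable ℂ fun ζ => M ζ i j)
    (hMeq : ∀ ζ : ℂ, ζ ∉ (Zset π (s + 1) : Set ℂ) →
      M ζ = m₀ (σ ζ) * Matrix.diagonal ![d₁ ζ, d₂ ζ] * (m₁ ζ)⁻¹)
    (hM'diff : ∀ i j, Differentiable ℂ fun ζ => M' ζ i j)
    (hM'eq : ∀ ζ : ℂ, ζ ∉ (Zset π (s + 2) : Set ℂ) →
      M' ζ = m₁ (σ ζ) * Matrix.diagonal ![d₁ ζ, d₂ ζ] * (m₂ ζ)⁻¹) :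
    ∀ ζ : ℂ, ζ ≠ (π (s + 1) : ℂ) →
      (1 + (σ ζ - (π s : ℂ))⁻¹ • A) * M ζ =
        M' ζ * (1 + (ζ - (π (s + 1) : ℂ))⁻¹ • A') :=
  stmt8_general N s hsN π η c₀ hη σ hσ hσπ d₁ d₂ m₀ m₁ m₂ A A' hA'2 hrel hrel' M M' hMdiff hMeq
    hM'diff hM'eq
end
end

section
/- (Uniqueness of the solution of the compatibility condition, in the algebraic form used in its proof.) Let π ∈ ℂ, let A, A′ ∈ Mat(2,ℂ) satisfy A² = 0 and A′² = 0, and let M, M′ : ℂ → Mat(2,ℂ) be analytic on all of ℂ with det M′(π) ≠ 0. If M(ζ)·(I + (ζ−π)^{−1}A) = M′(ζ)·(I + (ζ−π)^{−1}A′) for every ζ ∈ ℂ with ζ ≠ π, then A = A′ and M(ζ) = M′(ζ) for every ζ ∈ ℂ. -/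
/-! Clearing the pole gives `(ζ - x₀) • (M ζ - M' ζ) = M' ζ * A' - M ζ * A` off `x₀`, and both
sides are continuous, so `M x₀ * A = M' x₀ * A'`. Multiplying on the right by `A` and using
`A * A = 0` gives `M' x₀ * (A' * A) = 0`, so `A' * A = 0` because `M' x₀` is a unit. Then
`(M - M') * A = 0`, the identity becomes `(ζ - x₀) • (M ζ - M' ζ) = M' ζ * (A' - A)`, and evaluating
at `x₀` gives `A = A'`. Finally `M = M'` off `x₀`, hence everywhere by continuity. -/

open Filter Topology Matrix

noncomputable section

theorem eq_zero_of_forall_ne_sub_smul_eq {𝕜 E : Type*} [NontriviallyNormedField 𝕜]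
    [AddCommMonoid E] [Module 𝕜 E] [TopologicalSpace E] [ContinuousSMul 𝕜 E] [T2Space E]
    {x₀ : 𝕜} {F G : 𝕜 → E} (hF : Continuous F)
    (hG : Continuous G) (h : ∀ ζ ≠ x₀, (ζ - x₀) • F ζ = G ζ) : G x₀ = 0 := by
  have hext : (fun ζ => (ζ - x₀) • F ζ) = G :=
    Continuous.ext_on (dense_compl_singleton x₀) (by fun_prop) hG h
  simpa using (congrFun hext x₀).symm

theorem eq_of_mul_one_add_inv_sub_smul_eq {𝕜 R : Type*} [NontriviallyNormedField 𝕜] [Ring R]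
    [TopologicalSpace R] [IsTopologicalRing R] [T2Space R] [Algebra 𝕜 R] [ContinuousSMul 𝕜 R]
    {x₀ : 𝕜} {A A' : R} (hA : A * A = 0) {M M' : 𝕜 → R} (hM : Continuous M)
    (hM' : Continuous M') (hunit : IsUnit (M' x₀))
    (heq : ∀ ζ ≠ x₀, M ζ * (1 + (ζ - x₀)⁻¹ • A) = M' ζ * (1 + (ζ - x₀)⁻¹ • A')) :
    A = A' ∧ M = M' := by
  have hcleared : ∀ ζ ≠ x₀, (ζ - x₀) • (M ζ - M' ζ) = M' ζ * A' - M ζ * A := by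
    intro ζ hζ
    have hmul_sub := congrArg ((ζ - x₀) • ·) (heq ζ hζ)
    simp only [mul_add, mul_one, mul_smul_comm, smul_add, smul_smul,
      mul_inv_cancel₀ (sub_ne_zero.mpr hζ), one_smul] at hmul_sub
    rw [smul_sub, sub_eq_sub_iff_add_eq_add]
    exact hmul_sub.trans (add_comm _ _)
  have hA'A : A' * A = 0 := by
    have hx₀ : M' x₀ * A' - M x₀ * A = 0 :=
      eq_zero_of_forall_ne_sub_smul_eq (G := fun ζ => M' ζ * A' - M ζ * A) (hM.sub hM')
        (by fun_prop) hcleared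
    refine hunit.mul_right_eq_zero.mp ?_
    rw [← mul_assoc, sub_eq_zero.mp hx₀, mul_assoc, hA, mul_zero]
  have hcleared' : ∀ ζ ≠ x₀, (ζ - x₀) • (M ζ - M' ζ) = M' ζ * (A' - A) := by
    intro ζ hζ
    have hdiffA : (M ζ - M' ζ) * A = 0 := by
      have hmul := congrArg (· * A) (hcleared ζ hζ)
      simp only [smul_mul_assoc, sub_mul, mul_assoc, hA'A, hA, mul_zero, sub_zero] at hmul
      rw [← sub_mul] at hmul
      exact (smul_eq_zero.mp hmul).resolve_left (sub_ne_zero.mpr hζ)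
    rw [hcleared ζ hζ, mul_sub, sub_eq_zero.mp ((sub_mul _ _ _).symm.trans hdiffA)]
  have hAA' : A = A' := by
    have hx₀ : M' x₀ * (A' - A) = 0 :=
      eq_zero_of_forall_ne_sub_smul_eq (G := fun ζ => M' ζ * (A' - A)) (hM.sub hM')
        (by fun_prop) hcleared'
    exact (sub_eq_zero.mp (hunit.mul_right_eq_zero.mp hx₀)).symm
  refine ⟨hAA', Continuous.ext_on (dense_compl_singleton x₀) hM hM' fun ζ hζ => ?_⟩
  have hsmul := hcleared' ζ hζ
  rw [hAA', sub_self, mul_zero] at hsmul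
  exact sub_eq_zero.mp ((smul_eq_zero.mp hsmul).resolve_left (sub_ne_zero.mpr hζ))

theorem stmt9_general (x₀ : ℂ) (A A' : Mat2) (hA : A * A = 0)
    (M M' : ℂ → Mat2)
    (hM : ∀ i j, Differentiable ℂ fun ζ => M ζ i j)
    (hM' : ∀ i j, Differentiable ℂ fun ζ => M' ζ i j)
    (hdet : (M' x₀).det ≠ 0)
    (heq : ∀ ζ : ℂ, ζ ≠ x₀ →
      M ζ * (1 + (ζ - x₀)⁻¹ • A) = M' ζ * (1 + (ζ - x₀)⁻¹ • A')) :
    A = A' ∧ ∀ ζ : ℂ, M ζ = M' ζ := by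
  have continuous_of_entries {F : ℂ → Mat2} (hF : ∀ i j, Differentiable ℂ fun ζ => F ζ i j) :
      Continuous F :=
    continuous_matrix fun i j => (hF i j).continuous
  obtain ⟨hAA', hMM'⟩ := eq_of_mul_one_add_inv_sub_smul_eq hA (continuous_of_entries hM)
    (continuous_of_entries hM') ((isUnit_iff_isUnit_det _).mpr hdet.isUnit) heq
  exact ⟨hAA', congrFun hMM'⟩

/-- uniqueness of the solution of the compatibility condition. -/
theorem stmt9 (x₀ : ℂ) (A A' : Mat2) (hA : A * A = 0) (hA' : A' * A' = 0)
    (M M' : ℂ → Mat2)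
    (hM : ∀ i j, Differentiable ℂ fun ζ => M ζ i j)
    (hM' : ∀ i j, Differentiable ℂ fun ζ => M' ζ i j)
    (hdet : (M' x₀).det ≠ 0)
    (heq : ∀ ζ : ℂ, ζ ≠ x₀ →
      M ζ * (1 + (ζ - x₀)⁻¹ • A) = M' ζ * (1 + (ζ - x₀)⁻¹ • A')) :
    A = A' ∧ ∀ ζ : ℂ, M ζ = M' ζ :=
  stmt9_general x₀ A A' hA M M' hM hM' hdet heq
end
end
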